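/- arXiv:2103.16307 — 12 statements merged into one kernel-verified Lean document; each statement's English description precedes it below -/
import Mathlib

section
/- Let R be an associative unital ℂ-algebra and q a nonzero complex number. Suppose x, y, θ ∈ R satisfy the quantum superspace relations xy = yx, xθ = qθx, yθ = qθy, θ² = 0. Suppose a, b, c, d, α, β ∈ R satisfy: ab = ba, ac = ca, bc = cb, ad = q²da, bd = db, cd = dc, α² = 0, β² = 0, aα = qαa, bα = qαb, cα = qαc, aβ = q⁻¹βa, bβ = qβb, cβ = qβc, βα = -q²αβ, αd = dα, βd = q²dβ + (1-q²)α. Suppose moreover that a, b, c, d commute with each of x, y, θ, and that α, β commute with x and y and anticommute with θ (αθ = -θα, βθ = -θβ). Then the elements x' := ax + bdy + αcθ, y' := by + βcθ, θ' := cθ again satisfy x'y' = y'x', x'θ' = qθ'x', y'θ' = qθ'y', θ'² = 0. -/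
private lemma mve {R : Type*} [Ring R] {u v w : R} (h : u * v = w) (t : R) :
    u * (v * t) = w * t := by rw [← mul_assoc, h]

/-- Theorem 4.9 ('if' direction): the supermatrix action `x' = a·x + bd·y + αc·θ`,
`y' = b·y + βc·θ`, `θ' = c·θ` preserves the defining relations of the quantum
superspace `𝒪(ℂ_q^{2|1})`. -/
theorem supermatrix_preserves_quantum_superspace_relations
    (R : Type*) [Ring R] [Algebra ℂ R] (q : ℂ) (hq : q ≠ 0)
    (x y θ a b c d α β : R)
    -- quantum superspace relations
    (hxy : x * y = y * x) (hxθ : x * θ = q • (θ * x)) (hyθ : y * θ = q • (θ * y))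
    (hθθ : θ * θ = 0)
    -- relations among the matrix entries
    (hab : a * b = b * a) (hac : a * c = c * a) (hbc : b * c = c * b)
    (had : a * d = q ^ 2 • (d * a)) (hbd : b * d = d * b) (hcd : c * d = d * c)
    (hαα : α * α = 0) (hββ : β * β = 0)
    (haα : a * α = q • (α * a)) (hbα : b * α = q • (α * b)) (hcα : c * α = q • (α * c))
    (haβ : a * β = q⁻¹ • (β * a)) (hbβ : b * β = q • (β * b)) (hcβ : c * β = q • (β * c))
    (hβα : β * α = -(q ^ 2 • (α * β)))
    (hαd : α * d = d * α) (hβd : β * d = q ^ 2 • (d * β) + (1 - q ^ 2) • α)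
    -- the (even) entries a, b, c, d commute with x, y, θ
    (hax : a * x = x * a) (hay : a * y = y * a) (haθ : a * θ = θ * a)
    (hbx : b * x = x * b) (hby : b * y = y * b) (hbθ : b * θ = θ * b)
    (hcx : c * x = x * c) (hcy : c * y = y * c) (hcθ : c * θ = θ * c)
    (hdx : d * x = x * d) (hdy : d * y = y * d) (hdθ : d * θ = θ * d)
    -- the (odd) entries α, β commute with x, y and anticommute with θ
    (hαx : α * x = x * α) (hαy : α * y = y * α) (hαθ : α * θ = -(θ * α))
    (hβx : β * x = x * β) (hβy : β * y = y * β) (hβθ : β * θ = -(θ * β))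
    -- the transformed coordinates
    (x' y' θ' : R)
    (hx' : x' = a * x + b * d * y + α * c * θ)
    (hy' : y' = b * y + β * c * θ)
    (hθ' : θ' = c * θ) :
    x' * y' = y' * x' ∧ x' * θ' = q • (θ' * x') ∧ y' * θ' = q • (θ' * y') ∧
      θ' * θ' = 0 := by
  subst hx' hy' hθ'
  refine ⟨?_, ?_, ?_, ?_⟩ <;>
  · simp only [mul_add, add_mul, mul_assoc, smul_mul_assoc, mul_smul_comm, smul_smul,
      smul_add, neg_mul, mul_neg, smul_neg, neg_neg, neg_add,
      hxy, hxθ, hyθ, hθθ, hab, hac, hbc, had, hbd, hcd, hαα, hββ, haα, hbα, hcα,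
      haβ, hbβ, hcβ, hβα, hαd, hβd, hax, hay, haθ, hbx, hby, hbθ, hcx, hcy, hcθ,
      hdx, hdy, hdθ, hαx, hαy, hαθ, hβx, hβy, hβθ,
      mve hxy, mve hxθ, mve hyθ, mve hθθ, mve hab, mve hac, mve hbc, mve had,
      mve hbd, mve hcd, mve hαα, mve hββ, mve haα, mve hbα, mve hcα, mve haβ,
      mve hbβ, mve hcβ, mve hβα, mve hαd, mve hβd, mve hax, mve hay, mve haθ,
      mve hbx, mve hby, mve hbθ, mve hcx, mve hcy, mve hcθ, mve hdx, mve hdy,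
      mve hdθ, mve hαx, mve hαy, mve hαθ, mve hβx, mve hβy, mve hβθ,
      zero_mul, mul_zero, add_zero, zero_add] <;>
    (match_scalars <;> field_simp <;> try ring)
end

section
/- Let R be an associative unital ℂ-algebra and q a nonzero complex number. Suppose φ₁, φ₂, z ∈ R satisfy the exterior quantum superspace relations φ₁² = 0, φ₂² = 0, φ₁φ₂ = -q⁻²φ₂φ₁, φ₁z = q⁻¹zφ₁, φ₂z = q⁻¹zφ₂. Suppose a, b, c, d, α, β ∈ R satisfy: ab = ba, ac = ca, bc = cb, ad = q²da, bd = db, cd = dc, α² = 0, β² = 0, aα = qαa, bα = qαb, cα = qαc, aβ = q⁻¹βa, bβ = qβb, cβ = qβc, βα = -q²αβ, αd = dα, βd = q²dβ + (1-q²)α. Suppose moreover that a, b, c, d commute with each of φ₁, φ₂, z, and that α, β anticommute with φ₁ and φ₂ and commute with z. Then φ₁' := aφ₁ + bdφ₂ + αcz, φ₂' := bφ₂ + βcz, z' := cz again satisfy φ₁'² = 0, φ₂'² = 0, φ₁'φ₂' = -q⁻²φ₂'φ₁', φ₁'z' = q⁻¹z'φ₁', φ₂'z' = q⁻¹z'φ₂'.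 -/
/-- Theorem 4.9 ('if' direction) for the exterior algebra `Λ(ℂ_q^{2|1})`: the supermatrix
action `φ₁' = a·φ₁ + bd·φ₂ + αc·z`, `φ₂' = b·φ₂ + βc·z`, `z' = c·z` preserves the
exterior quantum superspace relations. -/
theorem supermatrix_preserves_exterior_quantum_superspace_relations
    (R : Type*) [Ring R] [Algebra ℂ R] (q : ℂ) (hq : q ≠ 0)
    (φ₁ φ₂ z a b c d α β : R)
    -- exterior quantum superspace relations
    (hφ₁φ₁ : φ₁ * φ₁ = 0) (hφ₂φ₂ : φ₂ * φ₂ = 0)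
    (hφ₁φ₂ : φ₁ * φ₂ = -(q⁻¹ ^ 2 • (φ₂ * φ₁)))
    (hφ₁z : φ₁ * z = q⁻¹ • (z * φ₁)) (hφ₂z : φ₂ * z = q⁻¹ • (z * φ₂))
    -- relations among the matrix entries
    (hab : a * b = b * a) (hac : a * c = c * a) (hbc : b * c = c * b)
    (had : a * d = q ^ 2 • (d * a)) (hbd : b * d = d * b) (hcd : c * d = d * c)
    (hαα : α * α = 0) (hββ : β * β = 0)
    (haα : a * α = q • (α * a)) (hbα : b * α = q • (α * b)) (hcα : c * α = q • (α * c))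
    (haβ : a * β = q⁻¹ • (β * a)) (hbβ : b * β = q • (β * b)) (hcβ : c * β = q • (β * c))
    (hβα : β * α = -(q ^ 2 • (α * β)))
    (hαd : α * d = d * α) (hβd : β * d = q ^ 2 • (d * β) + (1 - q ^ 2) • α)
    -- the (even) entries a, b, c, d commute with φ₁, φ₂, z
    (haφ₁ : a * φ₁ = φ₁ * a) (haφ₂ : a * φ₂ = φ₂ * a) (haz : a * z = z * a)
    (hbφ₁ : b * φ₁ = φ₁ * b) (hbφ₂ : b * φ₂ = φ₂ * b) (hbz : b * z = z * b)
    (hcφ₁ : c * φ₁ = φ₁ * c) (hcφ₂ : c * φ₂ = φ₂ * c) (hcz : c * z = z * c)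
    (hdφ₁ : d * φ₁ = φ₁ * d) (hdφ₂ : d * φ₂ = φ₂ * d) (hdz : d * z = z * d)
    -- the (odd) entries α, β anticommute with φ₁, φ₂ and commute with z
    (hαφ₁ : α * φ₁ = -(φ₁ * α)) (hαφ₂ : α * φ₂ = -(φ₂ * α)) (hαz : α * z = z * α)
    (hβφ₁ : β * φ₁ = -(φ₁ * β)) (hβφ₂ : β * φ₂ = -(φ₂ * β)) (hβz : β * z = z * β)
    -- the transformed coordinates
    (φ₁' φ₂' z' : R)
    (hφ₁' : φ₁' = a * φ₁ + b * d * φ₂ + α * c * z)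
    (hφ₂' : φ₂' = b * φ₂ + β * c * z)
    (hz' : z' = c * z) :
    φ₁' * φ₁' = 0 ∧ φ₂' * φ₂' = 0 ∧ φ₁' * φ₂' = -(q⁻¹ ^ 2 • (φ₂' * φ₁')) ∧
      φ₁' * z' = q⁻¹ • (z' * φ₁') ∧ φ₂' * z' = q⁻¹ • (z' * φ₂') := by
  -- associated versions of all relations
  have Hφ₁φ₁ : ∀ x : R, φ₁ * (φ₁ * x) = 0 := fun x => by
    rw [← mul_assoc, hφ₁φ₁, zero_mul]
  have Hφ₂φ₂ : ∀ x : R, φ₂ * (φ₂ * x) = 0 := fun x => by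
    rw [← mul_assoc, hφ₂φ₂, zero_mul]
  have Hαα : ∀ x : R, α * (α * x) = 0 := fun x => by
    rw [← mul_assoc, hαα, zero_mul]
  have Hββ : ∀ x : R, β * (β * x) = 0 := fun x => by
    rw [← mul_assoc, hββ, zero_mul]
  have Hφ₁φ₂ : ∀ x : R, φ₁ * (φ₂ * x) = -(q⁻¹ ^ 2 • (φ₂ * (φ₁ * x))) := fun x => by
    rw [← mul_assoc, hφ₁φ₂, neg_mul, smul_mul_assoc, mul_assoc]
  have Hφ₁z : ∀ x : R, φ₁ * (z * x) = q⁻¹ • (z * (φ₁ * x)) := fun x => by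
    rw [← mul_assoc, hφ₁z, smul_mul_assoc, mul_assoc]
  have Hφ₂z : ∀ x : R, φ₂ * (z * x) = q⁻¹ • (z * (φ₂ * x)) := fun x => by
    rw [← mul_assoc, hφ₂z, smul_mul_assoc, mul_assoc]
  have Hab : ∀ x : R, a * (b * x) = b * (a * x) := fun x => by
    rw [← mul_assoc, hab, mul_assoc]
  have Hac : ∀ x : R, a * (c * x) = c * (a * x) := fun x => by
    rw [← mul_assoc, hac, mul_assoc]
  have Hbc : ∀ x : R, b * (c * x) = c * (b * x) := fun x => by
    rw [← mul_assoc, hbc, mul_assoc]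
  have Had : ∀ x : R, a * (d * x) = q ^ 2 • (d * (a * x)) := fun x => by
    rw [← mul_assoc, had, smul_mul_assoc, mul_assoc]
  have Hbd : ∀ x : R, b * (d * x) = d * (b * x) := fun x => by
    rw [← mul_assoc, hbd, mul_assoc]
  have Hcd : ∀ x : R, c * (d * x) = d * (c * x) := fun x => by
    rw [← mul_assoc, hcd, mul_assoc]
  have Haα : ∀ x : R, a * (α * x) = q • (α * (a * x)) := fun x => by
    rw [← mul_assoc, haα, smul_mul_assoc, mul_assoc]
  have Hbα : ∀ x : R, b * (α * x) = q • (α * (b * x)) := fun x => by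
    rw [← mul_assoc, hbα, smul_mul_assoc, mul_assoc]
  have Hcα : ∀ x : R, c * (α * x) = q • (α * (c * x)) := fun x => by
    rw [← mul_assoc, hcα, smul_mul_assoc, mul_assoc]
  have Haβ : ∀ x : R, a * (β * x) = q⁻¹ • (β * (a * x)) := fun x => by
    rw [← mul_assoc, haβ, smul_mul_assoc, mul_assoc]
  have Hbβ : ∀ x : R, b * (β * x) = q • (β * (b * x)) := fun x => by
    rw [← mul_assoc, hbβ, smul_mul_assoc, mul_assoc]
  have Hcβ : ∀ x : R, c * (β * x) = q • (β * (c * x)) := fun x => by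
    rw [← mul_assoc, hcβ, smul_mul_assoc, mul_assoc]
  have Hβα : ∀ x : R, β * (α * x) = -(q ^ 2 • (α * (β * x))) := fun x => by
    rw [← mul_assoc, hβα, neg_mul, smul_mul_assoc, mul_assoc]
  have Hαd : ∀ x : R, α * (d * x) = d * (α * x) := fun x => by
    rw [← mul_assoc, hαd, mul_assoc]
  have Hβd : ∀ x : R, β * (d * x) = q ^ 2 • (d * (β * x)) + (1 - q ^ 2) • (α * x) :=
    fun x => by rw [← mul_assoc, hβd, add_mul, smul_mul_assoc, smul_mul_assoc, mul_assoc]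
  have Haφ₁ : ∀ x : R, a * (φ₁ * x) = φ₁ * (a * x) := fun x => by
    rw [← mul_assoc, haφ₁, mul_assoc]
  have Haφ₂ : ∀ x : R, a * (φ₂ * x) = φ₂ * (a * x) := fun x => by
    rw [← mul_assoc, haφ₂, mul_assoc]
  have Haz : ∀ x : R, a * (z * x) = z * (a * x) := fun x => by
    rw [← mul_assoc, haz, mul_assoc]
  have Hbφ₁ : ∀ x : R, b * (φ₁ * x) = φ₁ * (b * x) := fun x => by
    rw [← mul_assoc, hbφ₁, mul_assoc]
  have Hbφ₂ : ∀ x : R, b * (φ₂ * x) = φ₂ * (b * x) := fun x => by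
    rw [← mul_assoc, hbφ₂, mul_assoc]
  have Hbz : ∀ x : R, b * (z * x) = z * (b * x) := fun x => by
    rw [← mul_assoc, hbz, mul_assoc]
  have Hcφ₁ : ∀ x : R, c * (φ₁ * x) = φ₁ * (c * x) := fun x => by
    rw [← mul_assoc, hcφ₁, mul_assoc]
  have Hcφ₂ : ∀ x : R, c * (φ₂ * x) = φ₂ * (c * x) := fun x => by
    rw [← mul_assoc, hcφ₂, mul_assoc]
  have Hcz : ∀ x : R, c * (z * x) = z * (c * x) := fun x => by
    rw [← mul_assoc, hcz, mul_assoc]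
  have Hdφ₁ : ∀ x : R, d * (φ₁ * x) = φ₁ * (d * x) := fun x => by
    rw [← mul_assoc, hdφ₁, mul_assoc]
  have Hdφ₂ : ∀ x : R, d * (φ₂ * x) = φ₂ * (d * x) := fun x => by
    rw [← mul_assoc, hdφ₂, mul_assoc]
  have Hdz : ∀ x : R, d * (z * x) = z * (d * x) := fun x => by
    rw [← mul_assoc, hdz, mul_assoc]
  have Hαφ₁ : ∀ x : R, α * (φ₁ * x) = -(φ₁ * (α * x)) := fun x => by
    rw [← mul_assoc, hαφ₁, neg_mul, mul_assoc]
  have Hαφ₂ : ∀ x : R, α * (φ₂ * x) = -(φ₂ * (α * x)) := fun x => by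
    rw [← mul_assoc, hαφ₂, neg_mul, mul_assoc]
  have Hαz : ∀ x : R, α * (z * x) = z * (α * x) := fun x => by
    rw [← mul_assoc, hαz, mul_assoc]
  have Hβφ₁ : ∀ x : R, β * (φ₁ * x) = -(φ₁ * (β * x)) := fun x => by
    rw [← mul_assoc, hβφ₁, neg_mul, mul_assoc]
  have Hβφ₂ : ∀ x : R, β * (φ₂ * x) = -(φ₂ * (β * x)) := fun x => by
    rw [← mul_assoc, hβφ₂, neg_mul, mul_assoc]
  have Hβz : ∀ x : R, β * (z * x) = z * (β * x) := fun x => by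
    rw [← mul_assoc, hβz, mul_assoc]
  subst hφ₁' hφ₂' hz'
  have hq2 : q⁻¹ * q = 1 := inv_mul_cancel₀ hq
  have hq2' : q * q⁻¹ = 1 := mul_inv_cancel₀ hq
  refine ⟨?_, ?_, ?_, ?_, ?_⟩ <;>
  · simp only [mul_add, add_mul, mul_assoc, smul_mul_assoc, mul_smul_comm, smul_smul,
      smul_add, smul_neg, neg_mul, mul_neg, neg_neg, neg_add_rev, smul_zero, mul_zero,
      zero_mul, neg_zero, add_zero, zero_add,
      hφ₁φ₁, hφ₂φ₂, hαα, hββ, hφ₁φ₂, hφ₁z, hφ₂z, hab, hac, hbc, had, hbd, hcd,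
      haα, hbα, hcα, haβ, hbβ, hcβ, hβα, hαd, hβd, haφ₁, haφ₂, haz, hbφ₁, hbφ₂, hbz,
      hcφ₁, hcφ₂, hcz, hdφ₁, hdφ₂, hdz, hαφ₁, hαφ₂, hαz, hβφ₁, hβφ₂, hβz,
      Hφ₁φ₁, Hφ₂φ₂, Hαα, Hββ, Hφ₁φ₂, Hφ₁z, Hφ₂z, Hab, Hac, Hbc, Had, Hbd, Hcd,
      Haα, Hbα, Hcα, Haβ, Hbβ, Hcβ, Hβα, Hαd, Hβd, Haφ₁, Haφ₂, Haz, Hbφ₁, Hbφ₂, Hbz,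
      Hcφ₁, Hcφ₂, Hcz, Hdφ₁, Hdφ₂, Hdz, Hαφ₁, Hαφ₂, Hαz, Hβφ₁, Hβφ₂, Hβz]
    match_scalars <;> field_simp <;> ring
end

section
/- Let A and B be ℤ/2ℤ-graded associative unital ℂ-algebras and q a nonzero complex number. Let a, b, c, d ∈ A be even and α, β ∈ A odd, satisfying: ab = ba, ac = ca, bc = cb, ad = q²da, bd = db, cd = dc, α² = 0, β² = 0, aα = qαa, bα = qαb, cα = qαc, aβ = q⁻¹βa, bβ = qβb, cβ = qβc, βα = -q²αβ, αd = dα, βd = q²dβ + (1-q²)α. Let x, y ∈ B be even and θ ∈ B odd, satisfying xy = yx, xθ = qθx, yθ = qθy, θ² = 0. Then in the ℤ/2ℤ-graded (Koszul-signed) tensor product algebra A ⊗' B, where (a₁ ⊗ b₁)(a₂ ⊗ b₂) = (-1)^{p(b₁)p(a₂)} (a₁a₂ ⊗ b₁b₂) for homogeneous elements, the elements X := a⊗x + bd⊗y + αc⊗θ, Y := b⊗y + βc⊗θ, Θ := c⊗θ satisfy XY = YX, XΘ = qΘX, YΘ = qΘY, Θ² = 0. -/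
set_option maxRecDepth 8000

open TensorProduct GradedTensorProduct

section helpers
variable {A B : Type*} [Ring A] [Ring B] [Algebra ℂ A] [Algebra ℂ B]
  {𝒜 : ZMod 2 → Submodule ℂ A} {ℬ : ZMod 2 → Submodule ℂ B}
  [GradedAlgebra 𝒜] [GradedAlgebra ℬ]

lemma gmul_er (a₁ : A) {b₁ : B} (h1 : b₁ ∈ ℬ 0) {i : ZMod 2} {a₂ : A} (h2 : a₂ ∈ 𝒜 i) (b₂ : B) :
    (a₁ ᵍ⊗ₜ[ℂ] b₁ * a₂ ᵍ⊗ₜ[ℂ] b₂ : 𝒜 ᵍ⊗[ℂ] ℬ) = (a₁*a₂) ᵍ⊗ₜ[ℂ] (b₁*b₂) :=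
  tmul_zero_coe_mul_coe_tmul 𝒜 ℬ a₁ ⟨b₁,h1⟩ ⟨a₂,h2⟩ b₂

lemma gmul_el (a₁ : A) {j : ZMod 2} {b₁ : B} (h1 : b₁ ∈ ℬ j) {a₂ : A} (h2 : a₂ ∈ 𝒜 0) (b₂ : B) :
    (a₁ ᵍ⊗ₜ[ℂ] b₁ * a₂ ᵍ⊗ₜ[ℂ] b₂ : 𝒜 ᵍ⊗[ℂ] ℬ) = (a₁*a₂) ᵍ⊗ₜ[ℂ] (b₁*b₂) :=
  tmul_coe_mul_zero_coe_tmul 𝒜 ℬ a₁ ⟨b₁,h1⟩ ⟨a₂,h2⟩ b₂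

lemma gmul_oo (a₁ : A) {b₁ : B} (h1 : b₁ ∈ ℬ 1) {a₂ : A} (h2 : a₂ ∈ 𝒜 1) (b₂ : B) :
    (a₁ ᵍ⊗ₜ[ℂ] b₁ * a₂ ᵍ⊗ₜ[ℂ] b₂ : 𝒜 ᵍ⊗[ℂ] ℬ) = -((a₁*a₂) ᵍ⊗ₜ[ℂ] (b₁*b₂)) := by
  have h := tmul_coe_mul_coe_tmul 𝒜 ℬ a₁ ⟨b₁,h1⟩ ⟨a₂,h2⟩ b₂
  rw [h]
  norm_num [uzpow_one, Units.neg_smul]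

lemma gsmul_tmul (s : ℂ) (a : A) (b : B) :
    ((s • a) ᵍ⊗ₜ[ℂ] b : 𝒜 ᵍ⊗[ℂ] ℬ) = s • (a ᵍ⊗ₜ[ℂ] b) := by
  show of ℂ 𝒜 ℬ ((s • a) ⊗ₜ b) = s • of ℂ 𝒜 ℬ (a ⊗ₜ b)
  rw [← TensorProduct.smul_tmul', map_smul]

lemma gtmul_smul (s : ℂ) (a : A) (b : B) :
    (a ᵍ⊗ₜ[ℂ] (s • b) : 𝒜 ᵍ⊗[ℂ] ℬ) = s • (a ᵍ⊗ₜ[ℂ] b) := by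
  show of ℂ 𝒜 ℬ (a ⊗ₜ (s • b)) = s • of ℂ 𝒜 ℬ (a ⊗ₜ b)
  rw [TensorProduct.tmul_smul, map_smul]

lemma gadd_tmul (a₁ a₂ : A) (b : B) :
    ((a₁ + a₂) ᵍ⊗ₜ[ℂ] b : 𝒜 ᵍ⊗[ℂ] ℬ) = a₁ ᵍ⊗ₜ[ℂ] b + a₂ ᵍ⊗ₜ[ℂ] b := by
  show of ℂ 𝒜 ℬ ((a₁ + a₂) ⊗ₜ b) = _
  rw [TensorProduct.add_tmul, map_add]

lemma gtmul_zero (a : A) : (a ᵍ⊗ₜ[ℂ] (0:B) : 𝒜 ᵍ⊗[ℂ] ℬ) = 0 := by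
  show of ℂ 𝒜 ℬ (a ⊗ₜ (0:B)) = 0
  rw [TensorProduct.tmul_zero, map_zero]

end helpers

/-- Theorem 4.10(ii): the coaction `δ(x) = a⊗x + bd⊗y + αc⊗θ`, `δ(y) = b⊗y + βc⊗θ`,
`δ(θ) = c⊗θ` of the quantum supergroup on the quantum superspace preserves the
defining relations (3.1), when computed in the `ℤ/2ℤ`-graded (Koszul-signed)
tensor product algebra. -/
theorem coaction_preserves_quantum_superspace_relations
    (A B : Type*) [Ring A] [Ring B] [Algebra ℂ A] [Algebra ℂ B]
    (𝒜 : ZMod 2 → Submodule ℂ A) (ℬ : ZMod 2 → Submodule ℂ B)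
    [GradedAlgebra 𝒜] [GradedAlgebra ℬ]
    (q : ℂ) (hq : q ≠ 0)
    -- the entries of the supermatrix, with their parities
    (a b c d α β : A)
    (ha : a ∈ 𝒜 0) (hb : b ∈ 𝒜 0) (hc : c ∈ 𝒜 0) (hd : d ∈ 𝒜 0)
    (hαodd : α ∈ 𝒜 1) (hβodd : β ∈ 𝒜 1)
    -- relations among the matrix entries
    (hab : a * b = b * a) (hac : a * c = c * a) (hbc : b * c = c * b)
    (had : a * d = q ^ 2 • (d * a)) (hbd : b * d = d * b) (hcd : c * d = d * c)
    (hαα : α * α = 0) (hββ : β * β = 0)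
    (haα : a * α = q • (α * a)) (hbα : b * α = q • (α * b)) (hcα : c * α = q • (α * c))
    (haβ : a * β = q⁻¹ • (β * a)) (hbβ : b * β = q • (β * b)) (hcβ : c * β = q • (β * c))
    (hβα : β * α = -(q ^ 2 • (α * β)))
    (hαd : α * d = d * α) (hβd : β * d = q ^ 2 • (d * β) + (1 - q ^ 2) • α)
    -- the superspace coordinates, with their parities
    (x y θ : B)
    (hx : x ∈ ℬ 0) (hy : y ∈ ℬ 0) (hθodd : θ ∈ ℬ 1)
    (hxy : x * y = y * x) (hxθ : x * θ = q • (θ * x)) (hyθ : y * θ = q • (θ * y))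
    (hθθ : θ * θ = 0)
    -- the transformed coordinates in the graded tensor product
    (X Y Θ : 𝒜 ᵍ⊗[ℂ] ℬ)
    (hX : X = a ᵍ⊗ₜ[ℂ] x + (b * d) ᵍ⊗ₜ[ℂ] y + (α * c) ᵍ⊗ₜ[ℂ] θ)
    (hY : Y = b ᵍ⊗ₜ[ℂ] y + (β * c) ᵍ⊗ₜ[ℂ] θ)
    (hΘ : Θ = c ᵍ⊗ₜ[ℂ] θ) :
    X * Y = Y * X ∧ X * Θ = q • (Θ * X) ∧ Y * Θ = q • (Θ * Y) ∧ Θ * Θ = 0 := by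
  subst hX hY hΘ
  have hq2 : (q:ℂ)^2 ≠ 0 := pow_ne_zero _ hq
  -- memberships of composite words
  have hbd' : b * d ∈ 𝒜 0 := by simpa using SetLike.mul_mem_graded hb hd
  have hαc : α * c ∈ 𝒜 1 := by simpa using SetLike.mul_mem_graded hαodd hc
  have hβc : β * c ∈ 𝒜 1 := by simpa using SetLike.mul_mem_graded hβodd hc
  -- reversed relation: d*β in terms of β*d and α
  have hdβ : d * β = (q^2)⁻¹ • (β * d) + ((q^2)⁻¹ * (q^2 - 1)) • α := by
    have h1 : (q^2)⁻¹ • (β*d) + ((q^2)⁻¹ * (q^2-1)) • α = d*β := by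
      rw [hβd, smul_add, smul_smul, inv_mul_cancel₀ hq2, one_smul, smul_smul, add_assoc,
        ← add_smul]
      have hz : (q^2)⁻¹ * (1 - q^2) + (q^2)⁻¹ * (q^2 - 1) = 0 := by ring
      rw [hz, zero_smul, add_zero]
    exact h1.symm
  -- A-side word identities
  have I1 : a * (β * c) = q⁻¹ • (β * (c * a)) := by
    rw [← mul_assoc, haβ, smul_mul_assoc, mul_assoc, hac]
  have I2 : (b * d) * b = b * (b * d) := by
    calc (b*d)*b = (d*b)*b := by rw [hbd]
    _ = d*(b*b) := by rw [mul_assoc]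
    _ = b*(b*d) := by rw [← mul_assoc, ← hbd, mul_assoc, hbd]
  have I3 : (b * d) * (β * c)
      = q⁻¹ • (β * ((b * d) * c)) + (q⁻¹ * (q^2 - 1)) • (α * (b * c)) := by
    have h1 : (b*d)*β = q⁻¹ • (β * (b*d)) + (q⁻¹*(q^2-1)) • (α*b) := by
      rw [mul_assoc, hdβ, mul_add, mul_smul_comm, mul_smul_comm, ← mul_assoc, hbβ, hbα,
        smul_smul, smul_mul_assoc, smul_smul, mul_assoc]
      match_scalars <;> field_simp <;> ring
    calc (b*d)*(β*c) = ((b*d)*β)*c := (mul_assoc _ _ _).symm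
    _ = _ := by
        rw [h1, add_mul, smul_mul_assoc, smul_mul_assoc]
        simp only [mul_assoc]
  have I4 : (α * c) * b = α * (b * c) := by rw [mul_assoc, ← hbc]
  have I5 : b * (α * c) = q • (α * (b * c)) := by
    rw [← mul_assoc, hbα, smul_mul_assoc, mul_assoc]
  have I6 : c * (b * d) = (b * d) * c := by
    calc c*(b*d) = (c*b)*d := by rw [mul_assoc]
    _ = (b*c)*d := by rw [hbc]
    _ = b*(c*d) := by rw [mul_assoc]
    _ = b*(d*c) := by rw [hcd]
    _ = ((b*d)*c) := by rw [mul_assoc]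
  -- the pairwise products
  have P11 : (a ᵍ⊗ₜ[ℂ] x : 𝒜 ᵍ⊗[ℂ] ℬ) * (b ᵍ⊗ₜ[ℂ] y) = (a*b) ᵍ⊗ₜ[ℂ] (x*y) :=
    gmul_er a hx hb y
  have P12 : (a ᵍ⊗ₜ[ℂ] x : 𝒜 ᵍ⊗[ℂ] ℬ) * ((β*c) ᵍ⊗ₜ[ℂ] θ) = (β*(c*a)) ᵍ⊗ₜ[ℂ] (θ*x) := by
    rw [gmul_er a hx hβc, I1, gsmul_tmul, hxθ, gtmul_smul, smul_smul,
      inv_mul_cancel₀ hq, one_smul]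
  have P21 : ((b*d) ᵍ⊗ₜ[ℂ] y : 𝒜 ᵍ⊗[ℂ] ℬ) * (b ᵍ⊗ₜ[ℂ] y) = (b*(b*d)) ᵍ⊗ₜ[ℂ] (y*y) := by
    rw [gmul_er _ hy hb, I2]
  have P22 : ((b*d) ᵍ⊗ₜ[ℂ] y : 𝒜 ᵍ⊗[ℂ] ℬ) * ((β*c) ᵍ⊗ₜ[ℂ] θ)
      = (β*((b*d)*c)) ᵍ⊗ₜ[ℂ] (θ*y) + (q^2-1) • ((α*(b*c)) ᵍ⊗ₜ[ℂ] (θ*y)) := by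
    rw [gmul_er _ hy hβc, I3, gadd_tmul, gsmul_tmul, gsmul_tmul, hyθ, gtmul_smul, gtmul_smul,
      smul_smul, smul_smul]
    match_scalars <;> field_simp <;> ring
  have P31 : ((α*c) ᵍ⊗ₜ[ℂ] θ : 𝒜 ᵍ⊗[ℂ] ℬ) * (b ᵍ⊗ₜ[ℂ] y) = (α*(b*c)) ᵍ⊗ₜ[ℂ] (θ*y) := by
    rw [gmul_el _ hθodd hb, I4]
  have P32 : ((α*c) ᵍ⊗ₜ[ℂ] θ : 𝒜 ᵍ⊗[ℂ] ℬ) * ((β*c) ᵍ⊗ₜ[ℂ] θ) = 0 := by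
    rw [gmul_oo _ hθodd hβc, hθθ, gtmul_zero, neg_zero]
  have Q11 : (b ᵍ⊗ₜ[ℂ] y : 𝒜 ᵍ⊗[ℂ] ℬ) * (a ᵍ⊗ₜ[ℂ] x) = (a*b) ᵍ⊗ₜ[ℂ] (x*y) := by
    rw [gmul_er b hy ha, ← hab, ← hxy]
  have Q12 : (b ᵍ⊗ₜ[ℂ] y : 𝒜 ᵍ⊗[ℂ] ℬ) * ((b*d) ᵍ⊗ₜ[ℂ] y) = (b*(b*d)) ᵍ⊗ₜ[ℂ] (y*y) :=
    gmul_er b hy hbd' y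
  have Q13 : (b ᵍ⊗ₜ[ℂ] y : 𝒜 ᵍ⊗[ℂ] ℬ) * ((α*c) ᵍ⊗ₜ[ℂ] θ)
      = q^2 • ((α*(b*c)) ᵍ⊗ₜ[ℂ] (θ*y)) := by
    rw [gmul_er b hy hαc, I5, gsmul_tmul, hyθ, gtmul_smul, smul_smul, ← sq]
  have Q21 : ((β*c) ᵍ⊗ₜ[ℂ] θ : 𝒜 ᵍ⊗[ℂ] ℬ) * (a ᵍ⊗ₜ[ℂ] x) = (β*(c*a)) ᵍ⊗ₜ[ℂ] (θ*x) := by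
    rw [gmul_el _ hθodd ha, mul_assoc]
  have Q22 : ((β*c) ᵍ⊗ₜ[ℂ] θ : 𝒜 ᵍ⊗[ℂ] ℬ) * ((b*d) ᵍ⊗ₜ[ℂ] y)
      = (β*((b*d)*c)) ᵍ⊗ₜ[ℂ] (θ*y) := by
    rw [gmul_el _ hθodd hbd', mul_assoc, I6]
  have Q23 : ((β*c) ᵍ⊗ₜ[ℂ] θ : 𝒜 ᵍ⊗[ℂ] ℬ) * ((α*c) ᵍ⊗ₜ[ℂ] θ) = 0 := by
    rw [gmul_oo _ hθodd hαc, hθθ, gtmul_zero, neg_zero]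
  have R1 : (a ᵍ⊗ₜ[ℂ] x : 𝒜 ᵍ⊗[ℂ] ℬ) * (c ᵍ⊗ₜ[ℂ] θ) = q • ((c*a) ᵍ⊗ₜ[ℂ] (θ*x)) := by
    rw [gmul_er a hx hc, hac, hxθ, gtmul_smul]
  have R2 : ((b*d) ᵍ⊗ₜ[ℂ] y : 𝒜 ᵍ⊗[ℂ] ℬ) * (c ᵍ⊗ₜ[ℂ] θ) = q • (((b*d)*c) ᵍ⊗ₜ[ℂ] (θ*y)) := by
    rw [gmul_er _ hy hc, hyθ, gtmul_smul]
  have R3 : ((α*c) ᵍ⊗ₜ[ℂ] θ : 𝒜 ᵍ⊗[ℂ] ℬ) * (c ᵍ⊗ₜ[ℂ] θ) = 0 := by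
    rw [gmul_el _ hθodd hc, hθθ, gtmul_zero]
  have S1 : (c ᵍ⊗ₜ[ℂ] θ : 𝒜 ᵍ⊗[ℂ] ℬ) * (a ᵍ⊗ₜ[ℂ] x) = (c*a) ᵍ⊗ₜ[ℂ] (θ*x) :=
    gmul_el c hθodd ha x
  have S2 : (c ᵍ⊗ₜ[ℂ] θ : 𝒜 ᵍ⊗[ℂ] ℬ) * ((b*d) ᵍ⊗ₜ[ℂ] y) = ((b*d)*c) ᵍ⊗ₜ[ℂ] (θ*y) := by
    rw [gmul_el c hθodd hbd', I6]
  have S3 : (c ᵍ⊗ₜ[ℂ] θ : 𝒜 ᵍ⊗[ℂ] ℬ) * ((α*c) ᵍ⊗ₜ[ℂ] θ) = 0 := by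
    rw [gmul_oo c hθodd hαc, hθθ, gtmul_zero, neg_zero]
  have U1 : (b ᵍ⊗ₜ[ℂ] y : 𝒜 ᵍ⊗[ℂ] ℬ) * (c ᵍ⊗ₜ[ℂ] θ) = q • ((b*c) ᵍ⊗ₜ[ℂ] (θ*y)) := by
    rw [gmul_er b hy hc, hyθ, gtmul_smul]
  have U2 : ((β*c) ᵍ⊗ₜ[ℂ] θ : 𝒜 ᵍ⊗[ℂ] ℬ) * (c ᵍ⊗ₜ[ℂ] θ) = 0 := by
    rw [gmul_el _ hθodd hc, hθθ, gtmul_zero]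
  have V1 : (c ᵍ⊗ₜ[ℂ] θ : 𝒜 ᵍ⊗[ℂ] ℬ) * (b ᵍ⊗ₜ[ℂ] y) = (b*c) ᵍ⊗ₜ[ℂ] (θ*y) := by
    rw [gmul_el c hθodd hb, ← hbc]
  have V2 : (c ᵍ⊗ₜ[ℂ] θ : 𝒜 ᵍ⊗[ℂ] ℬ) * ((β*c) ᵍ⊗ₜ[ℂ] θ) = 0 := by
    rw [gmul_oo c hθodd hβc, hθθ, gtmul_zero, neg_zero]
  have W : (c ᵍ⊗ₜ[ℂ] θ : 𝒜 ᵍ⊗[ℂ] ℬ) * (c ᵍ⊗ₜ[ℂ] θ) = 0 := by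
    rw [gmul_el c hθodd hc, hθθ, gtmul_zero]
  refine ⟨?_, ?_, ?_, ?_⟩
  · simp only [add_mul, mul_add, P11, P12, P21, P22, P31, P32, Q11, Q12, Q13, Q21, Q22, Q23]
    module
  · simp only [add_mul, mul_add, R1, R2, R3, S1, S2, S3]
    module
  · simp only [add_mul, mul_add, U1, U2, V1, V2]
    module
  · exact W
end

section
/- Let R be an associative unital ℂ-algebra and q a nonzero complex number. Suppose x, y, θ, x', y' ∈ R satisfy xx' = x'x = 1, yy' = y'y = 1, xy = yx, xθ = qθx, yθ = qθy. Then (-q⁻¹·x·θ·y')·(x'·y) + θ = 0. -/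
/-- The left antipode identity `m∘(S⊗id)∘Δ(θ) = ε(θ)·1` of Theorem 3.1 for the Hopf
superalgebra `ℱ(ℂ_q^{2|1})`: with `S(θ) = -q⁻¹xθy⁻¹` and `Δ(θ) = θ⊗x⁻¹y + 1⊗θ`,
one has `S(θ)·(x⁻¹y) + θ = 0`. -/
theorem antipode_left_identity
    (R : Type*) [Ring R] [Algebra ℂ R] (q : ℂ) (hq : q ≠ 0)
    (x y θ x' y' : R)
    (hxx' : x * x' = 1) (hx'x : x' * x = 1)
    (hyy' : y * y' = 1) (hy'y : y' * y = 1)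
    (hxy : x * y = y * x) (hxθ : x * θ = q • (θ * x)) (hyθ : y * θ = q • (θ * y)) :
    (-(q⁻¹ • (x * θ * y'))) * (x' * y) + θ = 0 := by
  have hθy' : θ * y' = q • (y' * θ) := by
    calc θ * y' = (y' * y) * θ * y' := by rw [hy'y, one_mul]
    _ = y' * ((y * θ) * y') := by rw [mul_assoc, mul_assoc, mul_assoc]
    _ = y' * ((q • (θ * y)) * y') := by rw [hyθ]
    _ = q • (y' * (θ * (y * y'))) := by
        simp only [smul_mul_assoc, mul_smul_comm, mul_assoc]
    _ = q • (y' * θ) := by rw [hyy', mul_one]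
  have hθx' : θ * x' = q • (x' * θ) := by
    calc θ * x' = (x' * x) * θ * x' := by rw [hx'x, one_mul]
    _ = x' * ((x * θ) * x') := by rw [mul_assoc, mul_assoc, mul_assoc]
    _ = x' * ((q • (θ * x)) * x') := by rw [hxθ]
    _ = q • (x' * (θ * (x * x'))) := by
        simp only [smul_mul_assoc, mul_smul_comm, mul_assoc]
    _ = q • (x' * θ) := by rw [hxx', mul_one]
  have hθy : θ * y = q⁻¹ • (y * θ) := by
    rw [hyθ, smul_smul, inv_mul_cancel₀ hq, one_smul]
  have hy'x' : y' * x' = x' * y' := by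
    have h1 : (y' * x') * (x * y) = 1 := by
      rw [show y' * x' * (x * y) = y' * (x' * x * y) by simp only [mul_assoc],
        hx'x, one_mul, hy'y]
    have h2 : (x * y) * (x' * y') = 1 := by
      rw [hxy, show y * x * (x' * y') = y * (x * x' * y') by simp only [mul_assoc],
        hxx', one_mul, hyy']
    calc y' * x' = y' * x' * ((x * y) * (x' * y')) := by rw [h2, mul_one]
    _ = (y' * x' * (x * y)) * (x' * y') := by simp only [mul_assoc]
    _ = x' * y' := by rw [h1, one_mul]
  have key : x * θ * y' * (x' * y) = q • θ := by
    calc x * θ * y' * (x' * y) = x * (θ * y') * x' * y := by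
          simp only [mul_assoc]
    _ = x * (q • (y' * θ)) * x' * y := by rw [hθy']
    _ = q • (x * y' * (θ * x') * y) := by
          simp only [smul_mul_assoc, mul_smul_comm, mul_assoc]
    _ = q • (x * y' * (q • (x' * θ)) * y) := by rw [hθx']
    _ = (q * q) • (x * y' * x' * (θ * y)) := by
          simp only [smul_mul_assoc, mul_smul_comm, mul_assoc, smul_smul]
    _ = (q * q) • (x * y' * x' * (q⁻¹ • (y * θ))) := by rw [hθy]
    _ = (q * q * q⁻¹) • (x * (y' * x') * (y * θ)) := by
          simp only [smul_mul_assoc, mul_smul_comm, mul_assoc, smul_smul]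
    _ = q • (x * (x' * y') * (y * θ)) := by
          rw [hy'x', mul_assoc q, mul_inv_cancel₀ hq, mul_one]
    _ = q • θ := by
          rw [show x * (x' * y') * (y * θ) = (x * x') * (y' * y) * θ by
            simp only [mul_assoc]]
          rw [hxx', hy'y, one_mul, one_mul]
  rw [neg_mul, smul_mul_assoc, key, smul_smul, inv_mul_cancel₀ hq, one_smul,
    neg_add_cancel]
end

section
/- Let R be an associative unital ℂ-algebra and q a nonzero complex number. Suppose x, y, θ, x', y' ∈ R satisfy xx' = x'x = 1, yy' = y'y = 1, xy = yx, xθ = qθx, yθ = qθy. Then θ·(y'·x) + (-q⁻¹·x·θ·y') = 0. -/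
/-- The right antipode identity `m∘(id⊗S)∘Δ(θ) = ε(θ)·1` of Theorem 3.1 for the Hopf
superalgebra `ℱ(ℂ_q^{2|1})`: with `S(x⁻¹y) = y⁻¹x` and `S(θ) = -q⁻¹xθy⁻¹`,
one has `θ·(y⁻¹x) + S(θ) = 0`. -/
theorem antipode_right_identity
    (R : Type*) [Ring R] [Algebra ℂ R] (q : ℂ) (hq : q ≠ 0)
    (x y θ x' y' : R)
    (hxx' : x * x' = 1) (hx'x : x' * x = 1)
    (hyy' : y * y' = 1) (hy'y : y' * y = 1)
    (hxy : x * y = y * x) (hxθ : x * θ = q • (θ * x)) (hyθ : y * θ = q • (θ * y)) :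
    θ * (y' * x) + (-(q⁻¹ • (x * θ * y'))) = 0 := by
  have hxy' : x * y' = y' * x := by
    calc x * y' = y' * y * x * y' := by rw [hy'y, one_mul]
    _ = y' * (y * x) * y' := by rw [mul_assoc y' y x]
    _ = y' * (x * y) * y' := by rw [hxy]
    _ = y' * x * (y * y') := by rw [← mul_assoc y' x y, mul_assoc (y' * x) y y']
    _ = y' * x := by rw [hyy', mul_one]
  have h1 : q⁻¹ • (x * θ * y') = θ * x * y' := by
    rw [hxθ, smul_mul_assoc, smul_smul, inv_mul_cancel₀ hq, one_smul]
  rw [h1, mul_assoc, hxy', ← mul_assoc, add_neg_cancel]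
end

section
/- Let q be a nonzero complex number with complex conjugate q̄ = q⁻¹. Let F be the free unital ℂ-algebra on three generators ∂x, ∂y, ∂θ and let Ψ : F → F be the conjugate-linear algebra antihomomorphism (additive, Ψ(c·u) = c̄·Ψ(u) for c ∈ ℂ, Ψ(uv) = Ψ(v)Ψ(u)) determined by Ψ(∂x) = -q⁻²∂x, Ψ(∂y) = -q⁻⁴∂y, Ψ(∂θ) = q⁻⁴∂θ. Let I_∂ be the two-sided ideal of F generated by the elements ∂x∂y - q⁻²∂y∂x, ∂x∂θ - q⁻¹∂θ∂x, ∂y∂θ - q⁻¹∂θ∂y, ∂θ². Then Ψ(I_∂) ⊆ I_∂, so Ψ induces a conjugate-linear antiautomorphism of the quotient algebra 𝒪(∂ℂ_q^{2|1}) = F/I_∂. -/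
/-- Lemma 4.4: for `q̄ = q⁻¹`, the conjugate-linear antihomomorphism `Ψ` of the free
algebra `ℂ⟨∂x,∂y,∂θ⟩` with `Ψ(∂x) = -q⁻²∂x`, `Ψ(∂y) = -q⁻⁴∂y`, `Ψ(∂θ) = q⁻⁴∂θ`
preserves the defining ideal `I_∂` of `𝒪(∂ℂ_q^{2|1})`, hence induces a
conjugate-linear antiautomorphism of the quotient algebra. -/
theorem star_structure_on_partial_derivatives
    (q : ℂ) (hq : q ≠ 0) (hqbar : starRingEnd ℂ q = q⁻¹)
    (Ψ : FreeAlgebra ℂ (Fin 3) → FreeAlgebra ℂ (Fin 3))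
    (hadd : ∀ u v, Ψ (u + v) = Ψ u + Ψ v)
    (hsmul : ∀ (c : ℂ) u, Ψ (c • u) = (starRingEnd ℂ c) • Ψ u)
    (hmul : ∀ u v, Ψ (u * v) = Ψ v * Ψ u)
    (hone : Ψ 1 = 1)
    (hΨx : Ψ (FreeAlgebra.ι ℂ (0 : Fin 3)) = -(q⁻¹ ^ 2 • FreeAlgebra.ι ℂ (0 : Fin 3)))
    (hΨy : Ψ (FreeAlgebra.ι ℂ (1 : Fin 3)) = -(q⁻¹ ^ 4 • FreeAlgebra.ι ℂ (1 : Fin 3)))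
    (hΨθ : Ψ (FreeAlgebra.ι ℂ (2 : Fin 3)) = q⁻¹ ^ 4 • FreeAlgebra.ι ℂ (2 : Fin 3)) :
    let px := FreeAlgebra.ι ℂ (0 : Fin 3)
    let py := FreeAlgebra.ι ℂ (1 : Fin 3)
    let pθ := FreeAlgebra.ι ℂ (2 : Fin 3)
    let Ipd := TwoSidedIdeal.span
      {px * py - q⁻¹ ^ 2 • (py * px), px * pθ - q⁻¹ • (pθ * px),
       py * pθ - q⁻¹ • (pθ * py), pθ * pθ}
    ∀ u ∈ Ipd, Ψ u ∈ Ipd := by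
  intro px py pθ Ipd
  have hzero : Ψ 0 = 0 := by simpa using hsmul 0 0
  have hneg : ∀ u, Ψ (-u) = -Ψ u := fun u => by simpa using hsmul (-1) u
  have hsub : ∀ u v, Ψ (u - v) = Ψ u - Ψ v := fun u v => by
    rw [sub_eq_add_neg, hadd, hneg, sub_eq_add_neg]
  have hc : ∀ k : ℕ, starRingEnd ℂ (q⁻¹ ^ k) = q ^ k := fun k => by
    rw [map_pow, map_inv₀, hqbar, inv_inv]
  have hsmulmem : ∀ (c : ℂ) (u : FreeAlgebra ℂ (Fin 3)), u ∈ Ipd → c • u ∈ Ipd := by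
    intro c u hu
    rw [Algebra.smul_def]
    exact Ipd.mul_mem_left _ _ hu
  -- images of the generators
  have g1 : px * py - q⁻¹ ^ 2 • (py * px) ∈ Ipd :=
    TwoSidedIdeal.subset_span (by simp)
  have g2 : px * pθ - q⁻¹ • (pθ * px) ∈ Ipd :=
    TwoSidedIdeal.subset_span (by simp)
  have g3 : py * pθ - q⁻¹ • (pθ * py) ∈ Ipd :=
    TwoSidedIdeal.subset_span (by simp)
  have g4 : pθ * pθ ∈ Ipd :=
    TwoSidedIdeal.subset_span (by simp)
  have e1 : Ψ (px * py - q⁻¹ ^ 2 • (py * px)) =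
      (-(q⁻¹ ^ 4)) • (px * py - q⁻¹ ^ 2 • (py * px)) := by
    rw [hsub, hmul, hsmul, hmul, hΨx, hΨy, hc]
    simp only [neg_mul, mul_neg, neg_neg, smul_mul_assoc, mul_smul_comm, smul_smul,
      smul_sub, neg_smul, neg_sub]
    match_scalars <;> field_simp <;> ring
  have e2 : Ψ (px * pθ - q⁻¹ • (pθ * px)) =
      (q⁻¹ ^ 5) • (px * pθ - q⁻¹ • (pθ * px)) := by
    rw [hsub, hmul, hsmul, hmul, hΨx, hΨθ, map_inv₀, hqbar, inv_inv]
    simp only [neg_mul, mul_neg, neg_neg, smul_mul_assoc, mul_smul_comm, smul_smul,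
      smul_sub, neg_smul, neg_sub]
    match_scalars <;> field_simp <;> ring
  have e3 : Ψ (py * pθ - q⁻¹ • (pθ * py)) =
      (q⁻¹ ^ 7) • (py * pθ - q⁻¹ • (pθ * py)) := by
    rw [hsub, hmul, hsmul, hmul, hΨy, hΨθ, map_inv₀, hqbar, inv_inv]
    simp only [neg_mul, mul_neg, neg_neg, smul_mul_assoc, mul_smul_comm, smul_smul,
      smul_sub, neg_smul, neg_sub]
    match_scalars <;> field_simp <;> ring
  have e4 : Ψ (pθ * pθ) = (q⁻¹ ^ 8) • (pθ * pθ) := by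
    rw [hmul, hΨθ]
    simp only [smul_mul_assoc, mul_smul_comm, smul_smul]
    match_scalars <;> ring
  -- the preimage ideal
  intro u hu
  let J : TwoSidedIdeal (FreeAlgebra ℂ (Fin 3)) :=
    TwoSidedIdeal.mk' {u | Ψ u ∈ Ipd}
      (by simp [Set.mem_setOf_eq, hzero])
      (fun {x y} hx hy => by simp only [Set.mem_setOf_eq, hadd] at *; exact Ipd.add_mem hx hy)
      (fun {x} hx => by simp only [Set.mem_setOf_eq, hneg] at *; exact Ipd.neg_mem hx)
      (fun {x y} hy => by
        simp only [Set.mem_setOf_eq, hmul] at *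
        exact Ipd.mul_mem_right _ _ hy)
      (fun {x y} hx => by
        simp only [Set.mem_setOf_eq, hmul] at *
        exact Ipd.mul_mem_left _ _ hx)
  have : u ∈ J := by
    refine TwoSidedIdeal.mem_span_iff.mp hu J ?_
    intro v hv
    simp only [Set.mem_insert_iff, Set.mem_singleton_iff] at hv
    rcases hv with h | h | h | h <;> subst h <;>
      simp only [SetLike.mem_coe, TwoSidedIdeal.mem_mk', Set.mem_setOf_eq, J, e1, e2, e3, e4] <;>
      exact hsmulmem _ _ (by assumption)
  simpa only [TwoSidedIdeal.mem_mk', Set.mem_setOf_eq, J] using this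
end

section
/- Let R be an associative unital ℂ-algebra, q a nonzero complex number, and r, s arbitrary complex numbers. Suppose x, y, θ ∈ R satisfy xy = yx, xθ = qθx, yθ = qθy, θ² = 0. Define the 3×3 matrices over R: τx = [[rx,0,0],[0,rx,0],[0,0,q⁻¹rx]], τy = [[y,(r-1)x,0],[0,sy,0],[0,0,q⁻¹sy]], τθ = [[-qθ,0,(r-1)x],[0,-qθ,(s-1)y],[0,0,θ]]. Then τx·τy = τy·τx, τx·τθ = q·τθ·τx, τy·τθ = q·τθ·τy, and τθ² = 0. -/
set_option maxHeartbeats 1000000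


/-- Theorems 4.2/4.3, Remark 4.2: the matrices (4.7) of the map `τ`, encoding the
right module structure of the bimodule of 1-forms, satisfy the defining relations
(3.1) of `𝒪(ℂ_q^{2|1})`. -/
theorem tau_matrices_preserve_relations
    (R : Type*) [Ring R] [Algebra ℂ R] (q : ℂ) (hq : q ≠ 0) (r s : ℂ)
    (x y θ : R)
    (hxy : x * y = y * x) (hxθ : x * θ = q • (θ * x)) (hyθ : y * θ = q • (θ * y))
    (hθθ : θ * θ = 0) :
    let τx : Matrix (Fin 3) (Fin 3) R :=
      !![r • x, 0, 0; 0, r • x, 0; 0, 0, (q⁻¹ * r) • x]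
    let τy : Matrix (Fin 3) (Fin 3) R :=
      !![y, (r - 1) • x, 0; 0, s • y, 0; 0, 0, (q⁻¹ * s) • y]
    let τθ : Matrix (Fin 3) (Fin 3) R :=
      !![-(q • θ), 0, (r - 1) • x; 0, -(q • θ), (s - 1) • y; 0, 0, θ]
    τx * τy = τy * τx ∧ τx * τθ = q • (τθ * τx) ∧ τy * τθ = q • (τθ * τy) ∧
      τθ * τθ = 0 := by
  intro τx τy τθ
  refine ⟨?_, ?_, ?_, ?_⟩ <;>
    · ext i j
      fin_cases i <;> fin_cases j <;>
        simp [τx, τy, τθ, Matrix.mul_apply, Fin.sum_univ_succ, Matrix.smul_apply,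
          smul_mul_assoc, mul_smul_comm, hxy, hxθ, hyθ, hθθ, smul_smul,
          inv_mul_cancel₀ hq, mul_inv_cancel₀ hq] <;>
        first
          | rfl
          | simp [Matrix.vecHead, Matrix.vecTail]
          | (match_scalars <;> (try field_simp) <;>
              (first | ring1 | (left; ring1) | tauto | trivial))
end

section
/- Let R be an associative unital ℂ-algebra and q a nonzero complex number. Suppose x, y, θ, x' ∈ R satisfy xx' = x'x = 1, xy = yx, xθ = qθx, yθ = qθy, θ² = 0. Define the 3×3 matrices over R: M₁ = [[q⁻²x,0,0],[0,q⁻²x,0],[0,0,q⁻¹x]], M₂ = [[y,0,0],[(q⁻²-1)y,q⁻²y,0],[0,0,q⁻¹y]], M₃ = [[-θ,0,0],[0,-θ,0],[(1-q⁻²)x'y,(1-q⁻²)x'y,θ]]. Then M₁M₂ = M₂M₁, M₁M₃ = qM₃M₁, M₂M₃ = qM₃M₂, M₃² = 0. -/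
set_option maxHeartbeats 1000000


/-- Corollary 4.8 (Remark 4.8): the matrices (4.22) of the map `μ̃`, encoding the
commutation of elements of `ℱ(ℂ_q^{2|1})` with the right-invariant Maurer–Cartan
1-forms, satisfy the defining relations (3.1); here `x'` is the inverse of `x`. -/
theorem mu_tilde_matrices_preserve_relations
    (R : Type*) [Ring R] [Algebra ℂ R] (q : ℂ) (hq : q ≠ 0)
    (x y θ x' : R)
    (hxx' : x * x' = 1) (hx'x : x' * x = 1)
    (hxy : x * y = y * x) (hxθ : x * θ = q • (θ * x)) (hyθ : y * θ = q • (θ * y))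
    (hθθ : θ * θ = 0) :
    let M₁ : Matrix (Fin 3) (Fin 3) R :=
      !![q⁻¹ ^ 2 • x, 0, 0; 0, q⁻¹ ^ 2 • x, 0; 0, 0, q⁻¹ • x]
    let M₂ : Matrix (Fin 3) (Fin 3) R :=
      !![y, 0, 0; (q⁻¹ ^ 2 - 1) • y, q⁻¹ ^ 2 • y, 0; 0, 0, q⁻¹ • y]
    let M₃ : Matrix (Fin 3) (Fin 3) R :=
      !![-θ, 0, 0; 0, -θ, 0;
         (1 - q⁻¹ ^ 2) • (x' * y), (1 - q⁻¹ ^ 2) • (x' * y), θ]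
    M₁ * M₂ = M₂ * M₁ ∧ M₁ * M₃ = q • (M₃ * M₁) ∧ M₂ * M₃ = q • (M₃ * M₂) ∧
      M₃ * M₃ = 0 := by
  intro M₁ M₂ M₃
  have hyx : y * x = x * y := hxy.symm
  have hθx : θ * x = q⁻¹ • (x * θ) := by
    rw [hxθ, smul_smul, inv_mul_cancel₀ hq, one_smul]
  have hθy : θ * y = q⁻¹ • (y * θ) := by
    rw [hyθ, smul_smul, inv_mul_cancel₀ hq, one_smul]
  have hyx' : y * x' = x' * y := by
    have h := congrArg (fun t => x' * t * x') hxy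
    simp only [← mul_assoc, hx'x, one_mul] at h
    rw [mul_assoc, hxx', mul_one] at h
    exact h
  have hθx' : θ * x' = q • (x' * θ) := by
    have h := congrArg (fun t => x' * t * x') hxθ
    simp only [smul_mul_assoc, mul_smul_comm, ← mul_assoc, hx'x, one_mul] at h
    rw [mul_assoc, hxx', mul_one] at h
    exact h
  have hyxc : ∀ z : R, y * (x * z) = x * (y * z) := fun z => by
    rw [← mul_assoc, hyx, mul_assoc]
  have hθxc : ∀ z : R, θ * (x * z) = q⁻¹ • (x * (θ * z)) := fun z => by
    rw [← mul_assoc, hθx, smul_mul_assoc, mul_assoc]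
  have hθyc : ∀ z : R, θ * (y * z) = q⁻¹ • (y * (θ * z)) := fun z => by
    rw [← mul_assoc, hθy, smul_mul_assoc, mul_assoc]
  have hyx'c : ∀ z : R, y * (x' * z) = x' * (y * z) := fun z => by
    rw [← mul_assoc, hyx', mul_assoc]
  have hθx'c : ∀ z : R, θ * (x' * z) = q • (x' * (θ * z)) := fun z => by
    rw [← mul_assoc, hθx', smul_mul_assoc, mul_assoc]
  have hxx'c : ∀ z : R, x * (x' * z) = z := fun z => by rw [← mul_assoc, hxx', one_mul]
  have hx'xc : ∀ z : R, x' * (x * z) = z := fun z => by rw [← mul_assoc, hx'x, one_mul]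
  refine ⟨?_, ?_, ?_, ?_⟩ <;>
  · ext i j
    fin_cases i <;> fin_cases j <;>
      simp [M₁, M₂, M₃, Matrix.mul_apply, Fin.sum_univ_three, smul_mul_assoc,
        mul_smul_comm, smul_smul, mul_assoc, hθx, hθy, hyx, hyx', hθx', hθθ,
        hyxc, hθxc, hθyc, hyx'c, hθx'c,
        hxx', hx'x, hxx'c, hx'xc, Matrix.vecHead, Matrix.vecTail] <;>
      (try (match_scalars <;> (field_simp; try ring)))
end

section
/- Let q be a nonzero complex number and let W_q(2|1) be the quotient of the free unital ℂ-algebra on six generators x, y, θ, ∂x, ∂y, ∂θ by the two-sided ideal generated by: xy - yx, xθ - qθx, yθ - qθy, θ²; ∂x∂y - q⁻²∂y∂x, ∂x∂θ - q⁻¹∂θ∂x, ∂y∂θ - q⁻¹∂θ∂y, ∂θ²; ∂x·x - 1 - q⁻²x∂x, ∂x·y - y∂x, ∂x·θ - q⁻¹θ∂x, ∂y·x - q⁻²x∂y, ∂y·y - 1 - q⁻²y∂y - (q⁻²-1)x∂x, ∂y·θ - q⁻¹θ∂y, ∂θ·x - q⁻¹x∂θ, ∂θ·y - q⁻¹y∂θ,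 ∂θ·θ - 1 + θ∂θ - (q⁻²-1)(x∂x + y∂y). Set 𝒟 = x∂x + y∂y + θ∂θ and [n] = Σ_{j=0}^{n-1} q^{-2j}. Then for all m, m' ∈ ℕ and k ∈ {0,1}, with n = m + m' + k and f = x^m y^{m'} θ^k (images in W_q(2|1)), one has 𝒟·f = [n]·f + q^{-2n}·f·𝒟. -/
/-! The quantum Weyl superalgebra `W_q(2|1)` presented as a quotient of the free
algebra on the six generators `x, y, θ, ∂x, ∂y, ∂θ`. -/

/-- The generators of the free algebra: `0 ↦ x`, `1 ↦ y`, `2 ↦ θ`,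
`3 ↦ ∂x`, `4 ↦ ∂y`, `5 ↦ ∂θ`. -/
def wGen (i : Fin 6) : FreeAlgebra ℂ (Fin 6) := FreeAlgebra.ι ℂ i

/-- The defining relations of the quantum Weyl superalgebra `W_q(2|1)`:
relations (3.1) of the coordinates, relations (4.15) of the partial derivatives,
and the mixed relations (4.13). -/
inductive WeylRel (q : ℂ) : FreeAlgebra ℂ (Fin 6) → FreeAlgebra ℂ (Fin 6) → Prop
  | xy : WeylRel q (wGen 0 * wGen 1) (wGen 1 * wGen 0)
  | xθ : WeylRel q (wGen 0 * wGen 2) (q • (wGen 2 * wGen 0))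
  | yθ : WeylRel q (wGen 1 * wGen 2) (q • (wGen 2 * wGen 1))
  | θθ : WeylRel q (wGen 2 * wGen 2) 0
  | dxdy : WeylRel q (wGen 3 * wGen 4) (q⁻¹ ^ 2 • (wGen 4 * wGen 3))
  | dxdθ : WeylRel q (wGen 3 * wGen 5) (q⁻¹ • (wGen 5 * wGen 3))
  | dydθ : WeylRel q (wGen 4 * wGen 5) (q⁻¹ • (wGen 5 * wGen 4))
  | dθdθ : WeylRel q (wGen 5 * wGen 5) 0
  | dxx : WeylRel q (wGen 3 * wGen 0) (1 + q⁻¹ ^ 2 • (wGen 0 * wGen 3))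
  | dxy : WeylRel q (wGen 3 * wGen 1) (wGen 1 * wGen 3)
  | dxθ : WeylRel q (wGen 3 * wGen 2) (q⁻¹ • (wGen 2 * wGen 3))
  | dyx : WeylRel q (wGen 4 * wGen 0) (q⁻¹ ^ 2 • (wGen 0 * wGen 4))
  | dyy : WeylRel q (wGen 4 * wGen 1)
      (1 + q⁻¹ ^ 2 • (wGen 1 * wGen 4) + (q⁻¹ ^ 2 - 1) • (wGen 0 * wGen 3))
  | dyθ : WeylRel q (wGen 4 * wGen 2) (q⁻¹ • (wGen 2 * wGen 4))
  | dθx : WeylRel q (wGen 5 * wGen 0) (q⁻¹ • (wGen 0 * wGen 5))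
  | dθy : WeylRel q (wGen 5 * wGen 1) (q⁻¹ • (wGen 1 * wGen 5))
  | dθθ : WeylRel q (wGen 5 * wGen 2)
      (1 - wGen 2 * wGen 5 + (q⁻¹ ^ 2 - 1) • (wGen 0 * wGen 3 + wGen 1 * wGen 4))

/-- The quantum Weyl superalgebra `W_q(2|1)`. -/
abbrev WeylAlg (q : ℂ) := RingQuot (WeylRel q)

private lemma step_lemma {A : Type*} [Ring A] [Algebra ℂ A] {D g f : A} {t u S : ℂ}
    (hg : D * g = g + t • (g * D)) (hf : D * f = S • f + u • (f * D)) :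
    D * (g * f) = (1 + t * S) • (g * f) + (t * u) • (g * f * D) := by
  rw [← mul_assoc, hg, add_mul, smul_mul_assoc, mul_assoc g D f, hf]
  simp only [mul_add, mul_smul_comm, smul_smul, mul_assoc]
  module

private lemma iter_lemma {A : Type*} [Ring A] [Algebra ℂ A] {D g : A} {t : ℂ}
    (hg : D * g = g + t • (g * D)) :
    ∀ (m n : ℕ) (f : A), D * f = (∑ j ∈ Finset.range n, t ^ j) • f + t ^ n • (f * D) →
      D * (g ^ m * f) = (∑ j ∈ Finset.range (m + n), t ^ j) • (g ^ m * f)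
        + t ^ (m + n) • (g ^ m * f * D) := by
  intro m
  induction m with
  | zero => intro n f hf; simpa using hf
  | succ m ih =>
    intro n f hf
    have h3 := step_lemma hg (ih n f hf)
    have e : g * (g ^ m * f) = g ^ (m + 1) * f := by rw [pow_succ', mul_assoc]
    rw [e] at h3
    have hsum : (∑ j ∈ Finset.range (m + 1 + n), t ^ j)
        = 1 + t * ∑ j ∈ Finset.range (m + n), t ^ j := by
      rw [show m + 1 + n = (m + n) + 1 from by omega, geom_sum_succ]; ring
    have hpow : t ^ (m + 1 + n) = t * t ^ (m + n) := by
      rw [show m + 1 + n = (m + n) + 1 from by omega, pow_succ']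
    rw [hsum, hpow]
    exact h3

private lemma key (q : ℂ) (hq : q ≠ 0) (m m' k : ℕ) (hk : k ≤ 1) :
    (RingQuot.mkAlgHom ℂ (WeylRel q) (wGen 0) * RingQuot.mkAlgHom ℂ (WeylRel q) (wGen 3)
      + RingQuot.mkAlgHom ℂ (WeylRel q) (wGen 1) * RingQuot.mkAlgHom ℂ (WeylRel q) (wGen 4)
      + RingQuot.mkAlgHom ℂ (WeylRel q) (wGen 2) * RingQuot.mkAlgHom ℂ (WeylRel q) (wGen 5))
      * (RingQuot.mkAlgHom ℂ (WeylRel q) (wGen 0) ^ m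
        * RingQuot.mkAlgHom ℂ (WeylRel q) (wGen 1) ^ m'
        * RingQuot.mkAlgHom ℂ (WeylRel q) (wGen 2) ^ k)
    = (∑ j ∈ Finset.range (m + m' + k), q⁻¹ ^ (2 * j))
        • (RingQuot.mkAlgHom ℂ (WeylRel q) (wGen 0) ^ m
          * RingQuot.mkAlgHom ℂ (WeylRel q) (wGen 1) ^ m'
          * RingQuot.mkAlgHom ℂ (WeylRel q) (wGen 2) ^ k)
      + q⁻¹ ^ (2 * (m + m' + k))
        • ((RingQuot.mkAlgHom ℂ (WeylRel q) (wGen 0) ^ m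
          * RingQuot.mkAlgHom ℂ (WeylRel q) (wGen 1) ^ m'
          * RingQuot.mkAlgHom ℂ (WeylRel q) (wGen 2) ^ k)
          * (RingQuot.mkAlgHom ℂ (WeylRel q) (wGen 0) * RingQuot.mkAlgHom ℂ (WeylRel q) (wGen 3)
            + RingQuot.mkAlgHom ℂ (WeylRel q) (wGen 1) * RingQuot.mkAlgHom ℂ (WeylRel q) (wGen 4)
            + RingQuot.mkAlgHom ℂ (WeylRel q) (wGen 2) * RingQuot.mkAlgHom ℂ (WeylRel q) (wGen 5))) := by
  set X : WeylAlg q := RingQuot.mkAlgHom ℂ (WeylRel q) (wGen 0) with hXdef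
  set Y : WeylAlg q := RingQuot.mkAlgHom ℂ (WeylRel q) (wGen 1) with hYdef
  set Θ : WeylAlg q := RingQuot.mkAlgHom ℂ (WeylRel q) (wGen 2) with hΘdef
  set dX : WeylAlg q := RingQuot.mkAlgHom ℂ (WeylRel q) (wGen 3) with hdXdef
  set dY : WeylAlg q := RingQuot.mkAlgHom ℂ (WeylRel q) (wGen 4) with hdYdef
  set dΘ : WeylAlg q := RingQuot.mkAlgHom ℂ (WeylRel q) (wGen 5) with hdΘdef
  -- relations in the quotient
  have r1 : X * Y = Y * X := by
    simpa only [map_mul] using RingQuot.mkAlgHom_rel ℂ (WeylRel.xy (q := q))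
  have r2 : X * Θ = q • (Θ * X) := by
    simpa only [map_mul, map_smul] using RingQuot.mkAlgHom_rel ℂ (WeylRel.xθ (q := q))
  have r3 : Y * Θ = q • (Θ * Y) := by
    simpa only [map_mul, map_smul] using RingQuot.mkAlgHom_rel ℂ (WeylRel.yθ (q := q))
  have r4 : Θ * Θ = 0 := by
    simpa only [map_mul, map_zero] using RingQuot.mkAlgHom_rel ℂ (WeylRel.θθ (q := q))
  have r9 : dX * X = 1 + q⁻¹ ^ 2 • (X * dX) := by
    simpa only [map_mul, map_add, map_one, map_smul] using
      RingQuot.mkAlgHom_rel ℂ (WeylRel.dxx (q := q))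
  have r10 : dX * Y = Y * dX := by
    simpa only [map_mul] using RingQuot.mkAlgHom_rel ℂ (WeylRel.dxy (q := q))
  have r11 : dX * Θ = q⁻¹ • (Θ * dX) := by
    simpa only [map_mul, map_smul] using RingQuot.mkAlgHom_rel ℂ (WeylRel.dxθ (q := q))
  have r12 : dY * X = q⁻¹ ^ 2 • (X * dY) := by
    simpa only [map_mul, map_smul] using RingQuot.mkAlgHom_rel ℂ (WeylRel.dyx (q := q))
  have r13 : dY * Y = 1 + q⁻¹ ^ 2 • (Y * dY) + (q⁻¹ ^ 2 - 1) • (X * dX) := by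
    simpa only [map_mul, map_add, map_one, map_smul] using
      RingQuot.mkAlgHom_rel ℂ (WeylRel.dyy (q := q))
  have r14 : dY * Θ = q⁻¹ • (Θ * dY) := by
    simpa only [map_mul, map_smul] using RingQuot.mkAlgHom_rel ℂ (WeylRel.dyθ (q := q))
  have r15 : dΘ * X = q⁻¹ • (X * dΘ) := by
    simpa only [map_mul, map_smul] using RingQuot.mkAlgHom_rel ℂ (WeylRel.dθx (q := q))
  have r16 : dΘ * Y = q⁻¹ • (Y * dΘ) := by
    simpa only [map_mul, map_smul] using RingQuot.mkAlgHom_rel ℂ (WeylRel.dθy (q := q))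
  have r17 : dΘ * Θ = 1 - Θ * dΘ + (q⁻¹ ^ 2 - 1) • (X * dX + Y * dY) := by
    simpa only [map_mul, map_add, map_sub, map_one, map_smul] using
      RingQuot.mkAlgHom_rel ℂ (WeylRel.dθθ (q := q))
  -- normal-ordering helpers
  have r2' : Θ * X = q⁻¹ • (X * Θ) := by
    rw [r2, smul_smul, inv_mul_cancel₀ hq, one_smul]
  have r3' : Θ * Y = q⁻¹ • (Y * Θ) := by
    rw [r3, smul_smul, inv_mul_cancel₀ hq, one_smul]
  have sYX : ∀ t : WeylAlg q, Y * (X * t) = X * (Y * t) := fun t => by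
    rw [← mul_assoc, ← r1, mul_assoc]
  have sTX : ∀ t : WeylAlg q, Θ * (X * t) = q⁻¹ • (X * (Θ * t)) := fun t => by
    rw [← mul_assoc, r2', smul_mul_assoc, mul_assoc]
  have sTY : ∀ t : WeylAlg q, Θ * (Y * t) = q⁻¹ • (Y * (Θ * t)) := fun t => by
    rw [← mul_assoc, r3', smul_mul_assoc, mul_assoc]
  have sTT : ∀ t : WeylAlg q, Θ * (Θ * t) = 0 := fun t => by
    rw [← mul_assoc, r4, zero_mul]
  set D : WeylAlg q := X * dX + Y * dY + Θ * dΘ with hDdef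
  -- the three generator commutation lemmas
  have lemA : D * X = X + q⁻¹ ^ 2 • (X * D) := by
    rw [hDdef]
    simp only [add_mul, mul_add, mul_assoc, r9, r12, r15, mul_one, mul_smul_comm, smul_add,
      smul_smul, sYX, sTX, sTY, sTT]
    module
  have lemB : D * Y = Y + q⁻¹ ^ 2 • (Y * D) := by
    rw [hDdef]
    simp only [add_mul, mul_add, mul_assoc, r10, r13, r16, mul_one, mul_smul_comm, smul_add,
      smul_smul, sYX, sTX, sTY, sTT]
    module
  have lemC : D * Θ = Θ + q⁻¹ ^ 2 • (Θ * D) := by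
    rw [hDdef]
    simp only [add_mul, mul_add, mul_sub, mul_assoc, r11, r14, r17, mul_one, mul_smul_comm,
      smul_add, smul_smul, sYX, sTX, sTY, sTT, smul_zero, mul_zero, sub_zero]
    module
  have hΘk : D * (Θ ^ k) = (∑ j ∈ Finset.range k, (q⁻¹ ^ 2) ^ j) • Θ ^ k
      + (q⁻¹ ^ 2) ^ k • (Θ ^ k * D) := by
    interval_cases k
    · simp
    · simpa using lemC
  have hY := iter_lemma lemB m' k (Θ ^ k) hΘk
  have hX := iter_lemma lemA m (m' + k) (Y ^ m' * Θ ^ k) hY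
  calc D * (X ^ m * Y ^ m' * Θ ^ k) = D * (X ^ m * (Y ^ m' * Θ ^ k)) := by rw [mul_assoc]
    _ = _ := by
        rw [hX]
        simp only [pow_mul, mul_assoc, add_assoc]

/-- Theorem 4.12(i), first identity: the Euler derivation `𝒟 = x∂x + y∂y + θ∂θ`
satisfies `𝒟·f = [n]_{q⁻²}·f + q^{-2n}·f·𝒟` on the monomial `f = x^m y^{m'} θ^k`
of total degree `n = m + m' + k`. -/
theorem euler_derivation_on_monomials
    (q : ℂ) (hq : q ≠ 0) (m m' k : ℕ) (hk : k ≤ 1) :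
    let mk : FreeAlgebra ℂ (Fin 6) →ₐ[ℂ] WeylAlg q := RingQuot.mkAlgHom ℂ (WeylRel q)
    let D : WeylAlg q :=
      mk (wGen 0) * mk (wGen 3) + mk (wGen 1) * mk (wGen 4) + mk (wGen 2) * mk (wGen 5)
    let n := m + m' + k
    let f : WeylAlg q := mk (wGen 0) ^ m * mk (wGen 1) ^ m' * mk (wGen 2) ^ k
    D * f = (∑ j ∈ Finset.range n, q⁻¹ ^ (2 * j)) • f + q⁻¹ ^ (2 * n) • (f * D) := by
  exact key q hq m m' k hk
end

section
/- Let q be a nonzero complex number and let W_q(2|1) be the quotient of the free unital ℂ-algebra on six generators x, y, θ, ∂x, ∂y, ∂θ by the two-sided ideal generated by: xy - yx, xθ - qθx, yθ - qθy, θ²; ∂x∂y - q⁻²∂y∂x, ∂x∂θ - q⁻¹∂θ∂x, ∂y∂θ - q⁻¹∂θ∂y, ∂θ²; ∂x·x - 1 - q⁻²x∂x, ∂x·y - y∂x, ∂x·θ - q⁻¹θ∂x, ∂y·x - q⁻²x∂y, ∂y·y - 1 - q⁻²y∂y - (q⁻²-1)x∂x, ∂y·θ - q⁻¹θ∂y,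 ∂θ·x - q⁻¹x∂θ, ∂θ·y - q⁻¹y∂θ, ∂θ·θ - 1 + θ∂θ - (q⁻²-1)(x∂x + y∂y). Set 𝒟 = x∂x + y∂y + θ∂θ and [n] = Σ_{j=0}^{n-1} q^{-2j}. Then for all m, m' ∈ ℕ and k ∈ {0,1}, with n = m + m' + k and g = ∂x^m ∂y^{m'} ∂θ^k (images in W_q(2|1)), one has g·𝒟 = [n]·g + q^{-2n}·𝒟·g. -/
namespace WeylAux

variable (q : ℂ)

noncomputable def X (i : Fin 6) : WeylAlg q := RingQuot.mkAlgHom ℂ (WeylRel q) (wGen i)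

lemma rel {a b} (h : WeylRel q a b) :
    RingQuot.mkAlgHom ℂ (WeylRel q) a = RingQuot.mkAlgHom ℂ (WeylRel q) b :=
  RingQuot.mkAlgHom_rel ℂ h

noncomputable def Dq : WeylAlg q :=
  X q 0 * X q 3 + X q 1 * X q 4 + X q 2 * X q 5

-- primed relation lemmas with a trailing factor
lemma dxx' (b : WeylAlg q) : X q 3 * (X q 0 * b) = b + q⁻¹ ^ 2 • (X q 0 * (X q 3 * b)) := by
  have h := rel q (WeylRel.dxx (q := q))
  simp only [map_mul, map_smul, map_add, map_one] at h
  rw [← mul_assoc]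
  simp only [X]
  rw [h, add_mul, one_mul, smul_mul_assoc, mul_assoc]

lemma dxy' (b : WeylAlg q) : X q 3 * (X q 1 * b) = X q 1 * (X q 3 * b) := by
  have h := rel q (WeylRel.dxy (q := q))
  simp only [map_mul] at h
  rw [← mul_assoc]; simp only [X]; rw [h, mul_assoc]

lemma dxθ' (b : WeylAlg q) : X q 3 * (X q 2 * b) = q⁻¹ • (X q 2 * (X q 3 * b)) := by
  have h := rel q (WeylRel.dxθ (q := q))
  simp only [map_mul, map_smul] at h
  rw [← mul_assoc]; simp only [X]; rw [h, smul_mul_assoc, mul_assoc]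

lemma dyx' (b : WeylAlg q) : X q 4 * (X q 0 * b) = q⁻¹ ^ 2 • (X q 0 * (X q 4 * b)) := by
  have h := rel q (WeylRel.dyx (q := q))
  simp only [map_mul, map_smul] at h
  rw [← mul_assoc]; simp only [X]; rw [h, smul_mul_assoc, mul_assoc]

lemma dyy' (b : WeylAlg q) : X q 4 * (X q 1 * b) =
    b + q⁻¹ ^ 2 • (X q 1 * (X q 4 * b)) + (q⁻¹ ^ 2 - 1) • (X q 0 * (X q 3 * b)) := by
  have h := rel q (WeylRel.dyy (q := q))
  simp only [map_mul, map_smul, map_add, map_one] at h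
  rw [← mul_assoc]
  simp only [X]
  rw [h, add_mul, add_mul, one_mul, smul_mul_assoc, smul_mul_assoc, mul_assoc, mul_assoc]

lemma dyθ' (b : WeylAlg q) : X q 4 * (X q 2 * b) = q⁻¹ • (X q 2 * (X q 4 * b)) := by
  have h := rel q (WeylRel.dyθ (q := q))
  simp only [map_mul, map_smul] at h
  rw [← mul_assoc]; simp only [X]; rw [h, smul_mul_assoc, mul_assoc]

lemma dθx' (b : WeylAlg q) : X q 5 * (X q 0 * b) = q⁻¹ • (X q 0 * (X q 5 * b)) := by
  have h := rel q (WeylRel.dθx (q := q))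
  simp only [map_mul, map_smul] at h
  rw [← mul_assoc]; simp only [X]; rw [h, smul_mul_assoc, mul_assoc]

lemma dθy' (b : WeylAlg q) : X q 5 * (X q 1 * b) = q⁻¹ • (X q 1 * (X q 5 * b)) := by
  have h := rel q (WeylRel.dθy (q := q))
  simp only [map_mul, map_smul] at h
  rw [← mul_assoc]; simp only [X]; rw [h, smul_mul_assoc, mul_assoc]

lemma dθθ' (b : WeylAlg q) : X q 5 * (X q 2 * b) =
    b - X q 2 * (X q 5 * b)
      + (q⁻¹ ^ 2 - 1) • (X q 0 * (X q 3 * b) + X q 1 * (X q 4 * b)) := by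
  have h := rel q (WeylRel.dθθ (q := q))
  simp only [map_mul, map_smul, map_add, map_sub, map_one] at h
  rw [← mul_assoc]
  simp only [X]
  rw [h, add_mul, sub_mul, one_mul, smul_mul_assoc, add_mul, mul_assoc, mul_assoc, mul_assoc]

lemma dxdy' (b : WeylAlg q) : X q 3 * (X q 4 * b) = q⁻¹ ^ 2 • (X q 4 * (X q 3 * b)) := by
  have h := rel q (WeylRel.dxdy (q := q))
  simp only [map_mul, map_smul] at h
  rw [← mul_assoc]; simp only [X]; rw [h, smul_mul_assoc, mul_assoc]

lemma dxdθ' (b : WeylAlg q) : X q 3 * (X q 5 * b) = q⁻¹ • (X q 5 * (X q 3 * b)) := by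
  have h := rel q (WeylRel.dxdθ (q := q))
  simp only [map_mul, map_smul] at h
  rw [← mul_assoc]; simp only [X]; rw [h, smul_mul_assoc, mul_assoc]

lemma dydθ' (b : WeylAlg q) : X q 4 * (X q 5 * b) = q⁻¹ • (X q 5 * (X q 4 * b)) := by
  have h := rel q (WeylRel.dydθ (q := q))
  simp only [map_mul, map_smul] at h
  rw [← mul_assoc]; simp only [X]; rw [h, smul_mul_assoc, mul_assoc]

lemma dθdθ' (b : WeylAlg q) : X q 5 * (X q 5 * b) = 0 := by
  have h := rel q (WeylRel.dθdθ (q := q))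
  simp only [map_mul, map_zero] at h
  simp only [X]; rw [← mul_assoc, h, zero_mul]


lemma dxdy0 : X q 3 * X q 4 = q⁻¹ ^ 2 • (X q 4 * X q 3) := by
  have h := rel q (WeylRel.dxdy (q := q))
  simp only [map_mul, map_smul] at h; simp only [X]; exact h

lemma dxdθ0 : X q 3 * X q 5 = q⁻¹ • (X q 5 * X q 3) := by
  have h := rel q (WeylRel.dxdθ (q := q))
  simp only [map_mul, map_smul] at h; simp only [X]; exact h

lemma dydθ0 : X q 4 * X q 5 = q⁻¹ • (X q 5 * X q 4) := by
  have h := rel q (WeylRel.dydθ (q := q))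
  simp only [map_mul, map_smul] at h; simp only [X]; exact h

lemma dθdθ0 : X q 5 * X q 5 = 0 := by
  have h := rel q (WeylRel.dθdθ (q := q))
  simp only [map_mul, map_zero] at h; simp only [X]; exact h

-- the three key commutation relations with D
lemma dx_D : X q 3 * Dq q = X q 3 + q⁻¹ ^ 2 • (Dq q * X q 3) := by
  simp only [Dq, mul_add, add_mul, mul_assoc,
    dxx' , dxy', dxθ', dxdy', dxdθ', dxdy0, dxdθ0, smul_add, smul_smul, mul_smul_comm]
  module

lemma dy_D : X q 4 * Dq q = X q 4 + q⁻¹ ^ 2 • (Dq q * X q 4) := by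
  simp only [Dq, mul_add, add_mul, mul_assoc,
    dyx', dyy', dyθ', dxdy', dydθ', dxdy0, dxdθ0, dydθ0, smul_add, smul_smul, mul_smul_comm]
  module

lemma dθ_D : X q 5 * Dq q = X q 5 + q⁻¹ ^ 2 • (Dq q * X q 5) := by
  simp only [Dq, mul_add, add_mul, mul_assoc,
    dθx', dθy', dθθ', dxdθ', dydθ', dθdθ', dxdθ0, dydθ0, dθdθ0, mul_zero, zero_mul, smul_add, smul_smul, mul_smul_comm]
  module

def P (w : WeylAlg q) (s c : ℂ) : Prop := w * Dq q = s • w + c • (Dq q * w)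

lemma P_one : P q 1 0 1 := by simp [P]

lemma P_mul {u v : WeylAlg q} {s c t e : ℂ} (hu : P q u s c) (hv : P q v t e) :
    P q (u * v) (t + e * s) (e * c) := by
  unfold P at *
  calc u * v * Dq q = u * (v * Dq q) := mul_assoc _ _ _
    _ = u * (t • v + e • (Dq q * v)) := by rw [hv]
    _ = t • (u * v) + e • ((u * Dq q) * v) := by
        rw [mul_add, mul_smul_comm, mul_smul_comm, mul_assoc]
    _ = t • (u * v) + e • ((s • u + c • (Dq q * u)) * v) := by rw [hu]
    _ = _ := by
        rw [add_mul, smul_mul_assoc, smul_mul_assoc, mul_assoc]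
        module

lemma P_gen_pow {d : WeylAlg q} (hd : P q d 1 (q⁻¹ ^ 2)) (m : ℕ) :
    P q (d ^ m) (∑ j ∈ Finset.range m, (q⁻¹ ^ 2) ^ j) ((q⁻¹ ^ 2) ^ m) := by
  induction m with
  | zero => simpa using P_one q
  | succ m ih =>
      have h := P_mul q hd ih
      rw [← pow_succ', mul_one, ← pow_succ, ← Finset.sum_range_succ] at h
      exact h

lemma geom_split (r : ℂ) (a b : ℕ) :
    ∑ j ∈ Finset.range (a + b), r ^ j =
      (∑ j ∈ Finset.range a, r ^ j) + r ^ a * ∑ j ∈ Finset.range b, r ^ j := by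
  induction b with
  | zero => simp
  | succ b ih =>
      rw [Nat.add_succ, Finset.sum_range_succ, Finset.sum_range_succ, ih, mul_add, ← pow_add]
      ring

end WeylAux

/-- Theorem 4.12(i), second identity: the Euler derivation `𝒟 = x∂x + y∂y + θ∂θ`
satisfies `g·𝒟 = [n]_{q⁻²}·g + q^{-2n}·𝒟·g` on the monomial `g = ∂x^m ∂y^{m'} ∂θ^k`
of total degree `n = m + m' + k`. -/
theorem euler_derivation_on_derivative_monomials
    (q : ℂ) (hq : q ≠ 0) (m m' k : ℕ) (hk : k ≤ 1) :
    let mk : FreeAlgebra ℂ (Fin 6) →ₐ[ℂ] WeylAlg q := RingQuot.mkAlgHom ℂ (WeylRel q)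
    let D : WeylAlg q :=
      mk (wGen 0) * mk (wGen 3) + mk (wGen 1) * mk (wGen 4) + mk (wGen 2) * mk (wGen 5)
    let n := m + m' + k
    let g : WeylAlg q := mk (wGen 3) ^ m * mk (wGen 4) ^ m' * mk (wGen 5) ^ k
    g * D = (∑ j ∈ Finset.range n, q⁻¹ ^ (2 * j)) • g + q⁻¹ ^ (2 * n) • (D * g) := by
  intro mk D n g
  open WeylAux in
  have hx := P_gen_pow q (by simpa [P] using dx_D q) m
  have hy := P_gen_pow q (by simpa [P] using dy_D q) m'
  have hθ := P_gen_pow q (by simpa [P] using dθ_D q) k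
  have h := WeylAux.P_mul q (WeylAux.P_mul q hx hy) hθ
  unfold WeylAux.P at h
  show (WeylAux.X q 3 ^ m * WeylAux.X q 4 ^ m' * WeylAux.X q 5 ^ k) * WeylAux.Dq q =
    (∑ j ∈ Finset.range (m + m' + k), q⁻¹ ^ (2 * j)) •
      (WeylAux.X q 3 ^ m * WeylAux.X q 4 ^ m' * WeylAux.X q 5 ^ k) +
    q⁻¹ ^ (2 * (m + m' + k)) •
      (WeylAux.Dq q * (WeylAux.X q 3 ^ m * WeylAux.X q 4 ^ m' * WeylAux.X q 5 ^ k))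
  have hS : (∑ j ∈ Finset.range (m + m' + k), q⁻¹ ^ (2 * j)) =
      (∑ j ∈ Finset.range k, (q⁻¹ ^ 2) ^ j) +
        (q⁻¹ ^ 2) ^ k * ((∑ j ∈ Finset.range m', (q⁻¹ ^ 2) ^ j) +
          (q⁻¹ ^ 2) ^ m' * ∑ j ∈ Finset.range m, (q⁻¹ ^ 2) ^ j) := by
    simp only [pow_mul]
    rw [show m + m' + k = k + (m' + m) by omega, WeylAux.geom_split, WeylAux.geom_split]
  have hC : q⁻¹ ^ (2 * (m + m' + k)) = (q⁻¹ ^ 2) ^ k * ((q⁻¹ ^ 2) ^ m' * (q⁻¹ ^ 2) ^ m) := by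
    simp only [pow_mul, ← pow_add]
    congr 1
    omega
  rw [hS, hC]
  exact h
end

section
/- Let q be a nonzero complex number and let W_q(2|1) be the quotient of the free unital ℂ-algebra on six generators x, y, θ, ∂x, ∂y, ∂θ by the two-sided ideal generated by: xy - yx, xθ - qθx, yθ - qθy, θ²; ∂x∂y - q⁻²∂y∂x, ∂x∂θ - q⁻¹∂θ∂x, ∂y∂θ - q⁻¹∂θ∂y, ∂θ²; ∂x·x - 1 - q⁻²x∂x, ∂x·y - y∂x, ∂x·θ - q⁻¹θ∂x, ∂y·x - q⁻²x∂y, ∂y·y - 1 - q⁻²y∂y - (q⁻²-1)x∂x, ∂y·θ - q⁻¹θ∂y, ∂θ·x - q⁻¹x∂θ, ∂θ·y - q⁻¹y∂θ, ∂θ·θ - 1 + θ∂θ - (q⁻²-1)(x∂x + y∂y). Set 𝒟 = x∂x + y∂y + θ∂θ and ℰ = 1 + (q⁻² - 1)𝒟. Then in W_q(2|1): ℰ·x = q⁻²·x·ℰ, ℰ·y = q⁻²·y·ℰ, ℰ·θ = q⁻²·θ·ℰ, ∂x·ℰ = q⁻²·ℰ·∂x, ∂y·ℰ = q⁻²·ℰ·∂y,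 ∂θ·ℰ = q⁻²·ℰ·∂θ. -/
set_option maxHeartbeats 1000000

private lemma weyl_mulmul {A : Type*} [Semiring A] {a b c : A} (h : a * b = c) (z : A) :
    a * (b * z) = c * z := by rw [← mul_assoc, h]

/-- Abstract form of Theorem 4.12(iii): in any `ℂ`-algebra with elements satisfying the
defining relations of `W_q(2|1)`, the Euler element `ℰ = 1 + (q⁻² - 1)𝒟` is normal. -/
theorem weyl_aux {A : Type*} [Ring A] [Algebra ℂ A] (q : ℂ) (hq : q ≠ 0)
    (X Y T Dx Dy Dt : A)
    (hXY : X*Y = Y*X) (hXT : X*T = q•(T*X)) (hYT : Y*T = q•(T*Y)) (hTT : T*T = 0)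
    (hdxdy : Dx*Dy = q⁻¹^2•(Dy*Dx)) (hdxdt : Dx*Dt = q⁻¹•(Dt*Dx))
    (hdydt : Dy*Dt = q⁻¹•(Dt*Dy)) (hdtdt : Dt*Dt = 0)
    (hDxX : Dx*X = 1 + q⁻¹^2•(X*Dx)) (hDxY : Dx*Y = Y*Dx) (hDxT : Dx*T = q⁻¹•(T*Dx))
    (hDyX : Dy*X = q⁻¹^2•(X*Dy))
    (hDyY : Dy*Y = 1 + q⁻¹^2•(Y*Dy) + (q⁻¹^2-1)•(X*Dx))
    (hDyT : Dy*T = q⁻¹•(T*Dy))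
    (hDtX : Dt*X = q⁻¹•(X*Dt)) (hDtY : Dt*Y = q⁻¹•(Y*Dt))
    (hDtT : Dt*T = 1 - T*Dt + (q⁻¹^2-1)•(X*Dx + Y*Dy)) :
    (1 + (q⁻¹^2-1)•(X*Dx + Y*Dy + T*Dt)) * X
      = q⁻¹^2 • (X * (1 + (q⁻¹^2-1)•(X*Dx + Y*Dy + T*Dt))) ∧
    (1 + (q⁻¹^2-1)•(X*Dx + Y*Dy + T*Dt)) * Y
      = q⁻¹^2 • (Y * (1 + (q⁻¹^2-1)•(X*Dx + Y*Dy + T*Dt))) ∧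
    (1 + (q⁻¹^2-1)•(X*Dx + Y*Dy + T*Dt)) * T
      = q⁻¹^2 • (T * (1 + (q⁻¹^2-1)•(X*Dx + Y*Dy + T*Dt))) ∧
    Dx * (1 + (q⁻¹^2-1)•(X*Dx + Y*Dy + T*Dt))
      = q⁻¹^2 • ((1 + (q⁻¹^2-1)•(X*Dx + Y*Dy + T*Dt)) * Dx) ∧
    Dy * (1 + (q⁻¹^2-1)•(X*Dx + Y*Dy + T*Dt))
      = q⁻¹^2 • ((1 + (q⁻¹^2-1)•(X*Dx + Y*Dy + T*Dt)) * Dy) ∧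
    Dt * (1 + (q⁻¹^2-1)•(X*Dx + Y*Dy + T*Dt))
      = q⁻¹^2 • ((1 + (q⁻¹^2-1)•(X*Dx + Y*Dy + T*Dt)) * Dt) := by
  refine ⟨?_, ?_, ?_, ?_, ?_, ?_⟩ <;>
  · simp only [mul_add, add_mul, mul_sub, sub_mul, mul_one, one_mul, mul_zero, zero_mul,
      smul_add, smul_sub, smul_smul, mul_smul_comm, smul_mul_assoc, mul_assoc,
      hXY, hXT, hYT, hTT, hdxdy, hdxdt, hdydt, hdtdt, hDxX, hDxY, hDxT, hDyX, hDyY, hDyT,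
      hDtX, hDtY, hDtT,
      weyl_mulmul hXY, weyl_mulmul hXT, weyl_mulmul hYT, weyl_mulmul hTT,
      weyl_mulmul hdxdy, weyl_mulmul hdxdt, weyl_mulmul hdydt, weyl_mulmul hdtdt,
      weyl_mulmul hDxX, weyl_mulmul hDxY, weyl_mulmul hDxT, weyl_mulmul hDyX,
      weyl_mulmul hDyY, weyl_mulmul hDyT, weyl_mulmul hDtX, weyl_mulmul hDtY,
      weyl_mulmul hDtT,
      add_zero, zero_add, smul_zero]
    clear hXY hXT hYT hTT hdxdy hdxdt hdydt hdtdt hDxX hDxY hDxT hDyX hDyY hDyT hDtX hDtY hDtT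
    match_scalars <;> try ring
    all_goals (field_simp; try ring)

/-- Theorem 4.12(iii): `ℰ = 1 + (q⁻² - 1)𝒟`, where `𝒟 = x∂x + y∂y + θ∂θ` is the
Euler derivation, is a normal element of the quantum Weyl superalgebra `W_q(2|1)`:
`ℰu = q⁻²uℰ` for the coordinates and `∂uℰ = q⁻²ℰ∂u` for the derivatives. -/
theorem euler_element_normal (q : ℂ) (hq : q ≠ 0) :
    let mk : FreeAlgebra ℂ (Fin 6) →ₐ[ℂ] WeylAlg q := RingQuot.mkAlgHom ℂ (WeylRel q)
    let D : WeylAlg q :=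
      mk (wGen 0) * mk (wGen 3) + mk (wGen 1) * mk (wGen 4) + mk (wGen 2) * mk (wGen 5)
    let E : WeylAlg q := 1 + (q⁻¹ ^ 2 - 1) • D
    E * mk (wGen 0) = q⁻¹ ^ 2 • (mk (wGen 0) * E) ∧
    E * mk (wGen 1) = q⁻¹ ^ 2 • (mk (wGen 1) * E) ∧
    E * mk (wGen 2) = q⁻¹ ^ 2 • (mk (wGen 2) * E) ∧
    mk (wGen 3) * E = q⁻¹ ^ 2 • (E * mk (wGen 3)) ∧
    mk (wGen 4) * E = q⁻¹ ^ 2 • (E * mk (wGen 4)) ∧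
    mk (wGen 5) * E = q⁻¹ ^ 2 • (E * mk (wGen 5)) := by
  intro mk D E
  have rel : ∀ {a b}, WeylRel q a b → mk a = mk b := fun h => RingQuot.mkAlgHom_rel ℂ h
  refine weyl_aux q hq (mk (wGen 0)) (mk (wGen 1)) (mk (wGen 2)) (mk (wGen 3)) (mk (wGen 4))
    (mk (wGen 5)) ?_ ?_ ?_ ?_ ?_ ?_ ?_ ?_ ?_ ?_ ?_ ?_ ?_ ?_ ?_ ?_ ?_
  · simpa only [map_mul, map_smul, map_add, map_one, map_sub, map_zero] using rel WeylRel.xy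
  · simpa only [map_mul, map_smul, map_add, map_one, map_sub, map_zero] using rel WeylRel.xθ
  · simpa only [map_mul, map_smul, map_add, map_one, map_sub, map_zero] using rel WeylRel.yθ
  · simpa only [map_mul, map_smul, map_add, map_one, map_sub, map_zero] using rel WeylRel.θθ
  · simpa only [map_mul, map_smul, map_add, map_one, map_sub, map_zero] using rel WeylRel.dxdy
  · simpa only [map_mul, map_smul, map_add, map_one, map_sub, map_zero] using rel WeylRel.dxdθ
  · simpa only [map_mul, map_smul, map_add, map_one, map_sub, map_zero] using rel WeylRel.dydθ
  · simpa only [map_mul, map_smul, map_add, map_one, map_sub, map_zero] using rel WeylRel.dθdθ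
  · simpa only [map_mul, map_smul, map_add, map_one, map_sub, map_zero] using rel WeylRel.dxx
  · simpa only [map_mul, map_smul, map_add, map_one, map_sub, map_zero] using rel WeylRel.dxy
  · simpa only [map_mul, map_smul, map_add, map_one, map_sub, map_zero] using rel WeylRel.dxθ
  · simpa only [map_mul, map_smul, map_add, map_one, map_sub, map_zero] using rel WeylRel.dyx
  · simpa only [map_mul, map_smul, map_add, map_one, map_sub, map_zero] using rel WeylRel.dyy
  · simpa only [map_mul, map_smul, map_add, map_one, map_sub, map_zero] using rel WeylRel.dyθ
  · simpa only [map_mul, map_smul, map_add, map_one, map_sub, map_zero] using rel WeylRel.dθx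
  · simpa only [map_mul, map_smul, map_add, map_one, map_sub, map_zero] using rel WeylRel.dθy
  · simpa only [map_mul, map_smul, map_add, map_one, map_sub, map_zero] using rel WeylRel.dθθ
end

section
/- Let q be a nonzero complex number, F the free unital ℂ-algebra on three generators x, y, θ, and I_q the two-sided ideal of F generated by xy - yx, xθ - qθx, yθ - qθy, θ². Then the family of images of the monomials x^m y^n θ^k, for m, n ∈ ℕ and k ∈ {0,1}, in the quotient algebra 𝒪(ℂ_q^{2|1}) = F/I_q is a basis of 𝒪(ℂ_q^{2|1}) as a ℂ-vector space (it is linearly independent and spans). -/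
/-!
The relations let each generator be moved past a monomial `x^m y^n θ^k` into normal position:
`x` and `y` commute, `θ x^m y^n = q^{-(m+n)} x^m y^n θ` (this is where `q ≠ 0` enters) and
`θ² = 0`. Hence the span of the monomials contains `1` and is stable under left multiplication
by the generators, so it is everything. For independence, the same rules define operators on the
vector space with basis `e_{m,n,k}` that satisfy the relations; the resulting representation of
the quotient sends `x^m y^n θ^k` applied to `e_{0,0,0}` to `e_{m,n,k}`.
-/

/-- The defining relations (3.1) of the quantum superspace `ℂ_q^{2|1}`, on the free
algebra `ℂ⟨x, y, θ⟩` (with `0 ↦ x`, `1 ↦ y`, `2 ↦ θ`): `xy = yx`, `xθ = qθx`,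
`yθ = qθy`, `θ² = 0`. Quotienting by them yields the quotient of the free algebra
by the two-sided ideal generated by `xy - yx`, `xθ - qθx`, `yθ - qθy`, `θ²`. -/
inductive SuperspaceRel (q : ℂ) : FreeAlgebra ℂ (Fin 3) → FreeAlgebra ℂ (Fin 3) → Prop
  | xy : SuperspaceRel q (FreeAlgebra.ι ℂ 0 * FreeAlgebra.ι ℂ 1)
      (FreeAlgebra.ι ℂ 1 * FreeAlgebra.ι ℂ 0)
  | xθ : SuperspaceRel q (FreeAlgebra.ι ℂ 0 * FreeAlgebra.ι ℂ 2)
      (q • (FreeAlgebra.ι ℂ 2 * FreeAlgebra.ι ℂ 0))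
  | yθ : SuperspaceRel q (FreeAlgebra.ι ℂ 1 * FreeAlgebra.ι ℂ 2)
      (q • (FreeAlgebra.ι ℂ 2 * FreeAlgebra.ι ℂ 1))
  | θθ : SuperspaceRel q (FreeAlgebra.ι ℂ 2 * FreeAlgebra.ι ℂ 2) 0

/-- The algebra of polynomials `𝒪(ℂ_q^{2|1}) = ℂ⟨x,y,θ⟩/I_q`. -/
abbrev QuantumSuperspace (q : ℂ) := RingQuot (SuperspaceRel q)

open FreeAlgebra Finsupp Set Submodule

theorem mul_pow_eq_smul_pow_mul {R A : Type*} [CommSemiring R] [Semiring A] [Algebra R A]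
    {t a : A} {c : R} (h : t * a = c • (a * t)) (m : ℕ) :
    t * a ^ m = c ^ m • (a ^ m * t) := by
  induction m with
  | zero => simp
  | succ m ih =>
    rw [pow_succ, ← mul_assoc, ih, smul_mul_assoc, mul_assoc, h, mul_smul_comm, smul_smul,
      ← pow_succ, ← mul_assoc, pow_succ]

namespace QuantumSuperspace

variable {q : ℂ}

variable (q) in
noncomputable def gen (i : Fin 3) : QuantumSuperspace q :=
  RingQuot.mkAlgHom ℂ (SuperspaceRel q) (ι ℂ i)

variable (q) in
noncomputable def monomial (p : ℕ × ℕ × Fin 2) : QuantumSuperspace q :=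
  gen q 0 ^ p.1 * gen q 1 ^ p.2.1 * gen q 2 ^ (p.2.2 : ℕ)

theorem gen_zero_mul_gen_one : gen q 0 * gen q 1 = gen q 1 * gen q 0 := by
  simpa [gen] using RingQuot.mkAlgHom_rel ℂ (SuperspaceRel.xy (q := q))

theorem gen_two_mul_gen_zero (hq : q ≠ 0) : gen q 2 * gen q 0 = q⁻¹ • (gen q 0 * gen q 2) := by
  rw [show gen q 0 * gen q 2 = q • (gen q 2 * gen q 0) by
    simpa [gen] using RingQuot.mkAlgHom_rel ℂ (SuperspaceRel.xθ (q := q)), inv_smul_smul₀ hq]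

theorem gen_two_mul_gen_one (hq : q ≠ 0) : gen q 2 * gen q 1 = q⁻¹ • (gen q 1 * gen q 2) := by
  rw [show gen q 1 * gen q 2 = q • (gen q 2 * gen q 1) by
    simpa [gen] using RingQuot.mkAlgHom_rel ℂ (SuperspaceRel.yθ (q := q)), inv_smul_smul₀ hq]

theorem gen_two_mul_self : gen q 2 * gen q 2 = 0 := by
  simpa [gen] using RingQuot.mkAlgHom_rel ℂ (SuperspaceRel.θθ (q := q))

theorem monomial_zero_zero_zero : monomial q (0, 0, 0) = 1 := by
  simp [monomial]

theorem gen_zero_mul_monomial (m n : ℕ) (k : Fin 2) :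
    gen q 0 * monomial q (m, n, k) = monomial q (m + 1, n, k) := by
  simp only [monomial, pow_succ', mul_assoc]

theorem gen_one_mul_monomial (m n : ℕ) (k : Fin 2) :
    gen q 1 * monomial q (m, n, k) = monomial q (m, n + 1, k) := by
  simp only [monomial, pow_succ', ← mul_assoc,
    ((Commute.pow_left gen_zero_mul_gen_one m).symm).eq]

theorem gen_two_mul_monomial (hq : q ≠ 0) (m n : ℕ) (k : Fin 2) :
    gen q 2 * monomial q (m, n, k) =
      q⁻¹ ^ (m + n) • (gen q 0 ^ m * gen q 1 ^ n * gen q 2 ^ (k + 1 : ℕ)) := by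
  rw [monomial, ← mul_assoc, ← mul_assoc, mul_pow_eq_smul_pow_mul (gen_two_mul_gen_zero hq),
    smul_mul_assoc, smul_mul_assoc, mul_assoc _ (gen q 2),
    mul_pow_eq_smul_pow_mul (gen_two_mul_gen_one hq), mul_smul_comm, smul_mul_assoc, smul_smul,
    ← pow_add, pow_succ' (gen q 2)]
  simp only [mul_assoc]

theorem gen_two_mul_monomial_zero (hq : q ≠ 0) (m n : ℕ) :
    gen q 2 * monomial q (m, n, 0) = q⁻¹ ^ (m + n) • monomial q (m, n, 1) := by
  rw [gen_two_mul_monomial hq]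
  rfl

theorem gen_two_mul_monomial_one (hq : q ≠ 0) (m n : ℕ) :
    gen q 2 * monomial q (m, n, 1) = 0 := by
  simp [gen_two_mul_monomial hq, sq, gen_two_mul_self]

theorem span_le_comap_gen_mul (hq : q ≠ 0) (i : Fin 3) :
    span ℂ (range (monomial q)) ≤
      (span ℂ (range (monomial q))).comap (LinearMap.mulLeft ℂ (gen q i)) := by
  refine span_le.mpr (range_subset_iff.mpr fun ⟨m, n, k⟩ => ?_)
  have mem (p) : monomial q p ∈ span ℂ (range (monomial q)) := subset_span ⟨p, rfl⟩
  fin_cases i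
  · simpa [gen_zero_mul_monomial] using mem _
  · simpa [gen_one_mul_monomial] using mem _
  · fin_cases k
    · simpa [gen_two_mul_monomial_zero hq] using smul_mem _ (q⁻¹ ^ (m + n)) (mem _)
    · simp [gen_two_mul_monomial_one hq]

theorem span_monomial_eq_top (hq : q ≠ 0) : span ℂ (range (monomial q)) = ⊤ := by
  set S := span ℂ (range (monomial q))
  rw [eq_top_iff]
  rintro z -
  obtain ⟨w, rfl⟩ := RingQuot.mkAlgHom_surjective ℂ (SuperspaceRel q) z
  suffices h : ∀ s ∈ S, RingQuot.mkAlgHom ℂ (SuperspaceRel q) w * s ∈ S by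
    simpa using h 1 (monomial_zero_zero_zero (q := q) ▸ subset_span ⟨_, rfl⟩)
  induction w using FreeAlgebra.induction with
  | grade0 r => simpa [Algebra.algebraMap_eq_smul_one] using fun s hs => S.smul_mem r hs
  | grade1 i => exact fun s hs => span_le_comap_gen_mul hq i hs
  | mul a b ha hb => exact fun s hs => by simpa [mul_assoc] using ha _ (hb s hs)
  | add a b ha hb => exact fun s hs => by simpa [add_mul] using S.add_mem (ha s hs) (hb s hs)

noncomputable def raiseX : Module.End ℂ (ℕ × ℕ × Fin 2 →₀ ℂ) :=
  lmapDomain ℂ ℂ fun p => (p.1 + 1, p.2.1, p.2.2)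

noncomputable def raiseY : Module.End ℂ (ℕ × ℕ × Fin 2 →₀ ℂ) :=
  lmapDomain ℂ ℂ fun p => (p.1, p.2.1 + 1, p.2.2)

variable (q) in
noncomputable def raiseθ : Module.End ℂ (ℕ × ℕ × Fin 2 →₀ ℂ) :=
  lsum ℂ fun p => if p.2.2 = 0 then q⁻¹ ^ (p.1 + p.2.1) • lsingle (p.1, p.2.1, 1) else 0

@[simp]
theorem raiseX_single (m n : ℕ) (k : Fin 2) (c : ℂ) :
    raiseX (single (m, n, k) c) = single (m + 1, n, k) c := by
  simp [raiseX, mapDomain_single]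

@[simp]
theorem raiseY_single (m n : ℕ) (k : Fin 2) (c : ℂ) :
    raiseY (single (m, n, k) c) = single (m, n + 1, k) c := by
  simp [raiseY, mapDomain_single]

@[simp]
theorem raiseθ_single_zero (m n : ℕ) (c : ℂ) :
    raiseθ q (single (m, n, 0) c) = single (m, n, 1) (q⁻¹ ^ (m + n) * c) := by
  simp [raiseθ, smul_single]

@[simp]
theorem raiseθ_single_one (m n : ℕ) (c : ℂ) : raiseθ q (single (m, n, 1) c) = 0 := by
  simp [raiseθ]

@[simp]
theorem raiseX_pow_single (j m n : ℕ) (k : Fin 2) (c : ℂ) :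
    (raiseX ^ j) (single (m, n, k) c) = single (m + j, n, k) c := by
  induction j with
  | zero => rfl
  | succ j ih => rw [pow_succ', Module.End.mul_apply, ih, raiseX_single, add_assoc]

@[simp]
theorem raiseY_pow_single (j m n : ℕ) (k : Fin 2) (c : ℂ) :
    (raiseY ^ j) (single (m, n, k) c) = single (m, n + j, k) c := by
  induction j with
  | zero => rfl
  | succ j ih => rw [pow_succ', Module.End.mul_apply, ih, raiseY_single, add_assoc]

theorem lift_raise_eq_of_rel (hq : q ≠ 0) ⦃a b : FreeAlgebra ℂ (Fin 3)⦄
    (h : SuperspaceRel q a b) :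
    lift ℂ ![raiseX, raiseY, raiseθ q] a = lift ℂ ![raiseX, raiseY, raiseθ q] b := by
  -- `single_mul` would split the coefficients into pointwise products of finitely supported maps
  cases h <;> refine lhom_ext fun ⟨m, n, k⟩ c => ?_ <;> fin_cases k <;>
    simp [-single_mul, smul_single]
  all_goals congr 1; field_simp; ring

noncomputable def leftRegular (hq : q ≠ 0) :
    QuantumSuperspace q →ₐ[ℂ] Module.End ℂ (ℕ × ℕ × Fin 2 →₀ ℂ) :=
  RingQuot.liftAlgHom ℂ ⟨lift ℂ ![raiseX, raiseY, raiseθ q], lift_raise_eq_of_rel hq⟩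

theorem leftRegular_monomial_single_zero (hq : q ≠ 0) (p : ℕ × ℕ × Fin 2) :
    leftRegular hq (monomial q p) (single (0, 0, 0) 1) = single p 1 := by
  obtain ⟨m, n, k⟩ := p
  fin_cases k <;> simp [leftRegular, monomial, gen]

theorem linearIndependent_monomial (hq : q ≠ 0) : LinearIndependent ℂ (monomial q) := by
  refine LinearIndependent.of_comp
    (LinearMap.applyₗ (single (0, 0, 0) 1) ∘ₗ (leftRegular hq).toLinearMap) ?_
  convert linearIndependent_single_one ℂ (ℕ × ℕ × Fin 2) using 1
  exact funext (leftRegular_monomial_single_zero hq)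

end QuantumSuperspace

/-- The PBW-type basis assertion: the images of the monomials `x^m y^n θ^k`,
`m, n ∈ ℕ`, `k ∈ {0,1}`, form a `ℂ`-vector space basis of `𝒪(ℂ_q^{2|1})`. -/
theorem monomials_basis_of_quantum_superspace (q : ℂ) (hq : q ≠ 0) :
    let mk : FreeAlgebra ℂ (Fin 3) →ₐ[ℂ] QuantumSuperspace q :=
      RingQuot.mkAlgHom ℂ (SuperspaceRel q)
    let b : ℕ × ℕ × Fin 2 → QuantumSuperspace q := fun p =>
      mk (FreeAlgebra.ι ℂ 0) ^ p.1 * mk (FreeAlgebra.ι ℂ 1) ^ p.2.1 *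
        mk (FreeAlgebra.ι ℂ 2) ^ (p.2.2 : ℕ)
    LinearIndependent ℂ b ∧ Submodule.span ℂ (Set.range b) = ⊤ :=
  ⟨QuantumSuperspace.linearIndependent_monomial hq, QuantumSuperspace.span_monomial_eq_top hq⟩
end
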